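/- arXiv:1611.09500 — 8 statements merged into one kernel-verified Lean document; each statement's English description precedes it below -/
import Mathlib

section
/- If G is a connected graph of size m (number of edges), then pc(G) = m if and only if G is the star K_{1,m}. -/
open SimpleGraph

/-- An edge-coloring `c` with `k` colors is a *proper connection coloring* of `G`
if every pair of vertices is joined by a path whose consecutive edges have distinct colors. -/
def ProperConnColoring {V : Type*} (G : SimpleGraph V) {k : ℕ} (c : Sym2 V → Fin k) : Prop :=
  ∀ u v : V, ∃ p : G.Walk u v, p.IsPath ∧ (p.edges.map c).Chain' (· ≠ ·)

/-- The proper connection number of `G`. -/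
noncomputable def pc {V : Type*} (G : SimpleGraph V) : ℕ :=
  sInf {k | ∃ c : Sym2 V → Fin k, ProperConnColoring G c}

/-!
If one vertex lies on every edge, connectivity forces `G` to be the star centred there.
Otherwise `G` has two distinct edges that are disjoint or two sides of a triangle. Give them a
common colour and all other edges distinct colours. A geodesic never traverses both in a row
(disjoint edges are never consecutive, and the third side of the triangle would shorten it),
so geodesics are proper paths and `pc G ≤ m - 1`.
Conversely, colouring the `m` edges injectively always works, and in `K_{1,m}` two leaves are
joined only through the centre, so the `m` edges of a star need `m` colours.
-/

open Finset

namespace Finset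

variable {α : Type*} {s : Finset α} {n : ℕ}

theorem exists_fin_injOn (hs : s.Nonempty) (hn : #s ≤ n) : ∃ c : α → Fin n, Set.InjOn c s := by
  classical
  obtain ⟨a, ha⟩ := hs
  let f : s → Fin n := Fin.castLE hn ∘ s.equivFin
  refine ⟨fun x => if hx : x ∈ s then f ⟨x, hx⟩ else f ⟨a, ha⟩, fun x hx y hy hxy => ?_⟩
  have hf : Function.Injective f := (Fin.castLE_injective hn).comp s.equivFin.injective
  rw [mem_coe] at hx hy
  exact congrArg Subtype.val (hf (by simpa [hx, hy] using hxy))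

theorem exists_fin_card_sub_one_merge [DecidableEq α] {a b : α} (ha : a ∈ s) (hb : b ∈ s)
    (hab : a ≠ b) : ∃ c : α → Fin (#s - 1), ∀ x ∈ s, ∀ y ∈ s, c x = c y →
      x = y ∨ (x = a ∧ y = b) ∨ (x = b ∧ y = a) := by
  obtain ⟨c, hc⟩ := exists_fin_injOn (n := #s - 1) ⟨a, mem_erase.mpr ⟨hab, ha⟩⟩
    (card_erase_of_mem hb).le
  let g : α → α := fun x => if x = b then a else x
  have hg : ∀ x ∈ s, g x ∈ s.erase b := fun x hx => by
    by_cases hxb : x = b <;> simp [g, hxb, hab, ha, hx]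
  refine ⟨c ∘ g, fun x hx y hy hxy => ?_⟩
  have := hc (hg x hx) (hg y hy) hxy
  simp only [g] at this
  split_ifs at this <;> grind

end Finset

theorem SimpleGraph.completeBipartiteGraph.edges_eq_of_isPath {α β : Type*} [Unique α]
    {i j : β} (hij : i ≠ j) (p : (completeBipartiteGraph α β).Walk (.inr i) (.inr j))
    (hp : p.IsPath) : p.edges = [s(.inr i, .inl default), s(.inl default, .inr j)] := by
  match p, hp with
  | .nil, _ => exact absurd rfl hij
  | .cons (v := .inr _) h _, _ => simp at h
  | .cons (v := .inl _) _ (.cons (v := .inl _) h _), _ => simp at h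
  | .cons (v := .inl a) _ (.cons (v := .inr _) _ .nil), _ =>
    rw [Unique.eq_default a]; rfl
  | .cons (v := .inl a) _ (.cons (v := .inr _) _ (.cons (v := .inl a') _ _)), hp =>
    obtain rfl := Subsingleton.elim a' a
    simp at hp

namespace ProperConnColoring

variable {V W : Type*} {G : SimpleGraph V} {H : SimpleGraph W} {k : ℕ}

theorem pc_le {c : Sym2 V → Fin k} (hc : ProperConnColoring G c) : pc G ≤ k :=
  Nat.sInf_le ⟨c, hc⟩

theorem comap {c : Sym2 W → Fin k} (hc : ProperConnColoring H c) (e : G ≃g H) :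
    ProperConnColoring G (c ∘ Sym2.map e) := by
  intro u v
  obtain ⟨p, hp, hchain⟩ := hc (e u) (e v)
  refine ⟨(p.map e.symm.toHom).copy (e.symm_apply_apply u) (e.symm_apply_apply v),
    by simpa using hp.map e.symm.injective, ?_⟩
  have : (c ∘ Sym2.map e) ∘ Sym2.map e.symm = c := by
    ext s; simp [Sym2.map_map, Function.comp_def]
  simpa [Walk.edges_map, List.map_map, this] using hchain

theorem card_le_of_completeBipartiteGraph {α β : Type*} [Unique α] [Fintype β]
    {c : Sym2 (α ⊕ β) → Fin k} (hc : ProperConnColoring (completeBipartiteGraph α β) c) :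
    Fintype.card β ≤ k := by
  refine (Fintype.card_le_of_injective (fun j => c s(.inl default, .inr j))
    fun i j hcol => ?_).trans_eq (Fintype.card_fin k)
  by_contra hij
  obtain ⟨p, hp, hchain⟩ := hc (.inr i) (.inr j)
  rw [completeBipartiteGraph.edges_eq_of_isPath hij p hp] at hchain
  exact (List.isChain_cons_cons.mp hchain).1 (by simpa [Sym2.eq_swap] using hcol)

end ProperConnColoring

namespace SimpleGraph

variable {V : Type*} {G : SimpleGraph V}

theorem Walk.isChain_map_edges_of_length_le_dist {k : ℕ} {c : Sym2 V → Fin k}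
    (hc : ∀ u v w, G.Adj u v → G.Adj v w → u ≠ w → c s(u, v) = c s(v, w) → G.Adj u w) :
    ∀ {u w : V} (p : G.Walk u w), p.length ≤ G.dist u w → (p.edges.map c).IsChain (· ≠ ·)
  | _, _, .nil, _ => by simp
  | _, _, .cons _ .nil, _ => by simp
  | u, w, .cons (v := v) huv (.cons (v := x) hvx r), hp => by
    have hr : (Walk.cons hvx r).length ≤ G.dist v w := by
      obtain ⟨q, hq⟩ := (Walk.cons hvx r).reachable.exists_walk_length_eq_dist
      have := dist_le (Walk.cons huv q)
      simp only [Walk.length_cons] at hp this ⊢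
      omega
    refine List.isChain_cons_cons.mpr ⟨fun hcol => ?_,
      isChain_map_edges_of_length_le_dist hc _ hr⟩
    have hshort : G.dist u w ≤ r.length + 1 := by
      by_cases hux : u = x
      · subst hux; have := dist_le r; omega
      · exact dist_le (Walk.cons (hc u v x huv hvx hux hcol) r)
    simp only [Walk.length_cons] at hp
    omega

theorem Connected.properConnColoring {k : ℕ} {c : Sym2 V → Fin k} (hG : G.Connected)
    (hc : ∀ u v w, G.Adj u v → G.Adj v w → u ≠ w → c s(u, v) = c s(v, w) → G.Adj u w) :
    ProperConnColoring G c := fun u w => by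
  obtain ⟨p, hp, hlen⟩ := hG.exists_path_of_dist u w
  exact ⟨p, hp, Walk.isChain_map_edges_of_length_le_dist hc p hlen.le⟩

theorem Connected.exists_properConnColoring [Fintype G.edgeSet] [Nontrivial V]
    (hG : G.Connected) : ∃ c : Sym2 V → Fin #G.edgeFinset, ProperConnColoring G c := by
  have hE : G.edgeFinset.Nonempty := by
    obtain ⟨v⟩ := hG.nonempty
    obtain ⟨w, hvw⟩ := hG.preconnected.exists_adj_of_nontrivial v
    exact ⟨s(v, w), by simpa using hvw⟩
  obtain ⟨c, hc⟩ := Finset.exists_fin_injOn hE le_rfl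
  refine ⟨c, hG.properConnColoring fun u v w huv hvw huw hcol => ?_⟩
  have := hc (by simpa using huv) (by simpa using hvw) hcol
  exact absurd (Sym2.congr_left.mp (this.trans Sym2.eq_swap)) huw

def ShortcutPair (G : SimpleGraph V) (e₁ e₂ : Sym2 V) : Prop :=
  ∀ ⦃u v w⦄, u ≠ w → s(u, v) = e₁ → s(v, w) = e₂ → G.Adj u w

theorem shortcutPair_of_disjoint {e₁ e₂ : Sym2 V} (h : ∀ x ∈ e₁, x ∉ e₂) :
    G.ShortcutPair e₁ e₂ := by
  rintro u v w - rfl rfl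
  exact absurd (Sym2.mem_mk_left v w) (h v (Sym2.mem_mk_right u v))

theorem shortcutPair_of_adj {a b c : V} (hab : G.Adj a b) (hbc : G.Adj b c) (hac : G.Adj a c) :
    G.ShortcutPair s(a, b) s(b, c) := by
  intro u v w huw h₁ h₂
  have := hab.ne; have := hbc.ne; have := hac.ne
  rw [Sym2.eq_iff] at h₁ h₂
  grind

theorem Connected.pc_lt_card_edgeFinset [Fintype G.edgeSet] (hG : G.Connected)
    {e₁ e₂ : Sym2 V} (h₁ : e₁ ∈ G.edgeSet) (h₂ : e₂ ∈ G.edgeSet) (hne : e₁ ≠ e₂)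
    (hsc : G.ShortcutPair e₁ e₂) : pc G < #G.edgeFinset := by
  classical
  obtain ⟨c, hc⟩ := Finset.exists_fin_card_sub_one_merge (s := G.edgeFinset)
    (mem_edgeFinset.mpr h₁) (mem_edgeFinset.mpr h₂) hne
  have hcard : 0 < #G.edgeFinset := Finset.card_pos.mpr ⟨e₁, mem_edgeFinset.mpr h₁⟩
  suffices pc G ≤ #G.edgeFinset - 1 by omega
  refine (hG.properConnColoring (c := c) fun u v w huv hvw huw hcol => ?_).pc_le
  rcases hc _ (by simpa using huv) _ (by simpa using hvw) hcol with h | ⟨h₁, h₂⟩ | ⟨h₂, h₁⟩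
  · exact absurd (Sym2.congr_left.mp (h.trans Sym2.eq_swap)) huw
  · exact hsc huw h₁ h₂
  · exact (hsc huw.symm (Sym2.eq_swap.trans h₁) (Sym2.eq_swap.trans h₂)).symm

theorem exists_shortcutPair [Nonempty V] (h : ∀ v, ∃ e ∈ G.edgeSet, v ∉ e) :
    ∃ e₁ ∈ G.edgeSet, ∃ e₂ ∈ G.edgeSet, e₁ ≠ e₂ ∧ G.ShortcutPair e₁ e₂ := by
  have of_disjoint : ∀ e₁ ∈ G.edgeSet, ∀ e₂ ∈ G.edgeSet, (∀ x ∈ e₁, x ∉ e₂) →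
      ∃ e₁ ∈ G.edgeSet, ∃ e₂ ∈ G.edgeSet, e₁ ≠ e₂ ∧ G.ShortcutPair e₁ e₂ := by
    refine fun e₁ h₁ e₂ h₂ hd => ⟨e₁, h₁, e₂, h₂, ?_, shortcutPair_of_disjoint hd⟩
    rintro rfl
    exact hd _ e₁.out_fst_mem e₁.out_fst_mem
  obtain ⟨e, he, -⟩ := h (Classical.arbitrary V)
  induction e using Sym2.ind with | _ a b => ?_
  obtain ⟨f, hf, haf⟩ := h a
  obtain ⟨g, hg, hbg⟩ := h b
  by_cases hbf : b ∉ f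
  · exact of_disjoint _ he f hf (by simp [haf, hbf])
  obtain ⟨c, rfl⟩ := Sym2.mem_iff_exists.mp (not_not.mp hbf)
  by_cases hag : a ∉ g
  · exact of_disjoint _ he g hg (by simp [hag, hbg])
  obtain ⟨d, rfl⟩ := Sym2.mem_iff_exists.mp (not_not.mp hag)
  by_cases hdc : d = c
  · subst hdc
    refine ⟨s(a, b), he, s(b, d), hf, fun h => haf (h ▸ Sym2.mem_mk_left a b), ?_⟩
    exact shortcutPair_of_adj he hf hg
  · exact of_disjoint _ hg _ hf (by grind)

namespace Preconnected

variable [Nontrivial V]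

theorem adj_iff_of_forall_mem (hG : G.Preconnected) {v : V} (hv : ∀ e ∈ G.edgeSet, v ∈ e)
    {a b : V} : G.Adj a b ↔ a ≠ b ∧ (a = v ∨ b = v) := by
  have center_adj : ∀ {u}, u ≠ v → G.Adj v u := fun {u} hu => by
    obtain ⟨x, hux⟩ := hG.exists_adj_of_nontrivial u
    obtain rfl : x = v := by simpa [hu.symm, eq_comm] using hv s(u, x) hux
    exact hux.symm
  refine ⟨fun hab => ⟨hab.ne, by simpa [eq_comm] using hv s(a, b) hab⟩, ?_⟩
  rintro ⟨hab, rfl | rfl⟩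
  exacts [center_adj hab.symm, (center_adj hab).symm]

theorem card_edgeFinset_eq_of_forall_mem [Fintype V] [DecidableEq V] [DecidableRel G.Adj]
    (hG : G.Preconnected) {v : V} (hv : ∀ e ∈ G.edgeSet, v ∈ e) :
    #G.edgeFinset = Fintype.card {x // x ≠ v} := by
  have : G.incidenceFinset v = G.edgeFinset := by
    rw [incidenceFinset_eq_filter, filter_true_of_mem fun e he => hv e (by simpa using he)]
  rw [← this, card_incidenceFinset_eq_degree, ← card_neighborFinset_eq_degree,
    Fintype.card_subtype]
  congr 1
  ext x
  simp [hG.adj_iff_of_forall_mem hv, eq_comm]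

def isoCompleteBipartiteGraphOfForallMem [DecidableEq V] (hG : G.Preconnected) {v : V}
    (hv : ∀ e ∈ G.edgeSet, v ∈ e) :
    completeBipartiteGraph {x // x = v} {x // x ≠ v} ≃g G where
  toEquiv := Equiv.sumCompl (· = v)
  map_rel_iff' := by
    rintro (⟨a, rfl⟩ | ⟨a, ha⟩) (⟨b, hb⟩ | ⟨b, hb⟩) <;>
      simp_all [hG.adj_iff_of_forall_mem hv, Ne.symm]

theorem nonempty_iso_star_of_forall_mem [Fintype V] [DecidableEq V] [DecidableRel G.Adj]
    (hG : G.Preconnected) {v : V} (hv : ∀ e ∈ G.edgeSet, v ∈ e) :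
    Nonempty (G ≃g completeBipartiteGraph (Fin 1) (Fin #G.edgeFinset)) :=
  have := Unique.subtypeEq v
  ⟨(hG.isoCompleteBipartiteGraphOfForallMem hv).symm.trans <|
    completeBipartiteGraphCongr (Equiv.ofUnique _ _)
      (Fintype.equivFinOfCardEq (hG.card_edgeFinset_eq_of_forall_mem hv).symm)⟩

end Preconnected

end SimpleGraph

/-- For a connected graph `G` of size `m`, `pc(G) = m` iff `G` is the star `K_{1,m}`. -/
theorem pc_eq_size_iff_star {V : Type*} [Fintype V] [DecidableEq V] (G : SimpleGraph V)
    [DecidableRel G.Adj] (hG : G.Connected) [Nontrivial V] :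
    pc G = G.edgeFinset.card ↔
      Nonempty (G ≃g completeBipartiteGraph (Fin 1) (Fin G.edgeFinset.card)) := by
  constructor
  · intro hpc
    by_contra hstar
    have hcover : ∀ v, ∃ e ∈ G.edgeSet, v ∉ e := by
      by_contra! ⟨v, hv⟩
      exact hstar (hG.preconnected.nonempty_iso_star_of_forall_mem hv)
    have := hG.nonempty
    obtain ⟨e₁, h₁, e₂, h₂, hne, hsc⟩ := exists_shortcutPair hcover
    exact (hG.pc_lt_card_edgeFinset h₁ h₂ hne hsc).ne hpc
  · rintro ⟨e⟩
    obtain ⟨c, hc⟩ := hG.exists_properConnColoring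
    refine le_antisymm hc.pc_le (le_csInf ⟨_, c, hc⟩ ?_)
    rintro k ⟨c', hc'⟩
    simpa using (hc'.comap e.symm).card_le_of_completeBipartiteGraph
end

section
/- If G is a traceable graph (i.e., G has a Hamiltonian path) that is not complete, then pc(G) = 2. -/
open SimpleGraph

/-!
Colour the edges of a Hamiltonian path alternately. Any two vertices lie on the path, and the
segment between them is a path whose consecutive edges are consecutive on the Hamiltonian path,
hence differently coloured; so `pc G ≤ 2`. Conversely, two distinct non-adjacent vertices are
joined only by paths with at least two edges, whose first two edges need different colours;
so `2 ≤ pc G` as soon as `G` is not complete.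
-/

theorem List.isChain_idxOf_mod_two_ne {α : Type*} [DecidableEq α] {L l : List α}
    (hL : L.Nodup) (hl : l <:+: L) :
    l.IsChain (fun x y => L.idxOf x % 2 ≠ L.idxOf y % 2) := by
  refine List.IsChain.infix ?_ hl
  rw [List.isChain_iff_getElem]
  intro i hi
  rw [hL.idxOf_getElem, hL.idxOf_getElem]
  omega

namespace SimpleGraph.Walk

variable {V : Type*} {G : SimpleGraph V} {a b : V}

theorem exists_isSubwalk_or_reverse_isSubwalk (p : G.Walk a b) {u v : V}
    (hu : u ∈ p.support) (hv : v ∈ p.support) :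
    ∃ q : G.Walk u v, q.IsSubwalk p ∨ q.reverse.IsSubwalk p := by
  classical
  by_cases huv : u ∈ (p.takeUntil v hv).support
  · exact ⟨_, .inl ((isSubwalk_dropUntil _ huv).trans (isSubwalk_takeUntil _ hv))⟩
  · have hu' : u ∈ (p.dropUntil v hv).support := by
      rw [← p.take_spec hv, mem_support_append_iff] at hu
      exact hu.resolve_left huv
    refine ⟨((p.dropUntil v hv).takeUntil u hu').reverse, .inr ?_⟩
    rw [reverse_reverse]
    exact (isSubwalk_takeUntil _ hu').trans (isSubwalk_dropUntil _ hv)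

variable [DecidableEq V]

def parityColoring (p : G.Walk a b) : Sym2 V → Fin 2 :=
  fun e => ⟨p.edges.idxOf e % 2, Nat.mod_lt _ two_pos⟩

theorem IsTrail.isChain_map_parityColoring {p : G.Walk a b} (hp : p.IsTrail) {l : List (Sym2 V)}
    (hl : l <:+: p.edges) : (l.map p.parityColoring).IsChain (· ≠ ·) := by
  rw [List.isChain_map]
  refine (List.isChain_idxOf_mod_two_ne hp.edges_nodup hl).imp fun _ _ hxy hc => hxy ?_
  simpa [parityColoring, Fin.ext_iff] using hc

theorem IsPath.exists_isPath_isChain_map_parityColoring {p : G.Walk a b} (hp : p.IsPath)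
    {u v : V} (hu : u ∈ p.support) (hv : v ∈ p.support) :
    ∃ q : G.Walk u v, q.IsPath ∧ (q.edges.map p.parityColoring).IsChain (· ≠ ·) := by
  obtain ⟨q, hq | hq⟩ := p.exists_isSubwalk_or_reverse_isSubwalk hu hv
  · exact ⟨q, isPath_of_isSubwalk hq hp, hp.isTrail.isChain_map_parityColoring hq.edges_isInfix⟩
  · refine ⟨q, isPath_reverse_iff q |>.mp (isPath_of_isSubwalk hq hp), ?_⟩
    have := hp.isTrail.isChain_map_parityColoring hq.edges_isInfix
    rw [edges_reverse, List.map_reverse, List.isChain_reverse] at this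
    exact this.imp fun _ _ => Ne.symm

end SimpleGraph.Walk

theorem two_le_of_properConnColoring {V : Type*} {G : SimpleGraph V} (hG : G ≠ ⊤) {k : ℕ}
    {c : Sym2 V → Fin k} (hc : ProperConnColoring G c) : 2 ≤ k := by
  obtain ⟨x, y, hxy, hnadj⟩ := ne_top_iff_exists_not_adj.mp hG
  obtain ⟨q, -, hchain⟩ := hc x y
  rcases q with _ | ⟨h, _ | _⟩
  · exact absurd rfl hxy
  · exact absurd h hnadj
  · simp only [Walk.edges_cons, List.map_cons] at hchain
    exact Fin.nontrivial_iff_two_le.mp ⟨_, _, (List.isChain_cons_cons.mp hchain).1⟩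

theorem pc_eq_two_of_traceable_general {V : Type*} [DecidableEq V] (G : SimpleGraph V)
    (htrace : ∃ (u v : V) (p : G.Walk u v), p.IsHamiltonian ∧ p.IsPath)
    (hnc : G ≠ ⊤) : pc G = 2 := by
  obtain ⟨a, b, p, hham, hpath⟩ := htrace
  have h2 : ∃ c : Sym2 V → Fin 2, ProperConnColoring G c :=
    ⟨p.parityColoring, fun u v =>
      hpath.exists_isPath_isChain_map_parityColoring (hham.mem_support u) (hham.mem_support v)⟩
  exact le_antisymm (Nat.sInf_le h2) (le_csInf ⟨2, h2⟩ fun _ ⟨_, hc⟩ =>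
    two_le_of_properConnColoring hnc hc)

/-- A traceable noncomplete graph has proper connection number 2. -/
theorem pc_eq_two_of_traceable {V : Type*} [Fintype V] [DecidableEq V] (G : SimpleGraph V)
    (htrace : ∃ (u v : V) (p : G.Walk u v), p.IsHamiltonian ∧ p.IsPath)
    (hnc : G ≠ ⊤) : pc G = 2 :=
  pc_eq_two_of_traceable_general G htrace hnc
end

section
/- Let G be a connected graph with pc(G) = 2 and let v be a vertex not in G. If v is joined to G by at least two edges, then the resulting graph G ∪ v satisfies pc(G ∪ v) = 2. -/
open SimpleGraph

/-! Let `u₁, u₂` be two neighbours of the new vertex `v` and `P` a proper `u₁`–`u₂` path of a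
2-colouring of `G`. Colour `v u₁` and `v u₂` opposite to the first and the last edge of `P`: then
`v u₁ P u₂ v` is a cycle whose colouring is proper except possibly at `v`. A proper path from a
vertex `w` of `G` to `u₂` first meets this cycle at some `z ≠ v`; the two cycle edges at `z` have
different colours, so going round the cycle one way or the other from `z` continues the path
properly to `v`. Conversely `pc(G ∪ v) ≥ 2`, since `pc G = 2` forces `G`, hence `G ∪ v`, to be
incomplete. -/

namespace SimpleGraph.Walk

variable {V α : Type*} {G : SimpleGraph V} (c : Sym2 V → α) {u v w : V}

def IsProper (p : G.Walk u v) : Prop := (p.edges.map c).IsChain (· ≠ ·)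

def firstColor (p : G.Walk u v) : Option α := (p.edges.map c).head?

def lastColor (p : G.Walk u v) : Option α := (p.edges.map c).getLast?

variable {c}

@[simp] lemma isProper_nil : (nil : G.Walk u u).IsProper c := List.IsChain.nil

lemma isProper_cons_iff (h : G.Adj u v) (p : G.Walk v w) :
    (cons h p).IsProper c ↔ (∀ x ∈ p.firstColor c, c s(u, v) ≠ x) ∧ p.IsProper c :=
  List.isChain_cons

lemma isProper_append_iff (p : G.Walk u v) (q : G.Walk v w) :
    (p.append q).IsProper c ↔
      p.IsProper c ∧ q.IsProper c ∧ ∀ x ∈ p.lastColor c, ∀ y ∈ q.firstColor c, x ≠ y := by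
  rw [IsProper, edges_append, List.map_append, List.isChain_append]
  rfl

@[simp] lemma isProper_reverse_iff (p : G.Walk u v) : p.reverse.IsProper c ↔ p.IsProper c := by
  rw [IsProper, IsProper, edges_reverse, List.map_reverse, List.isChain_reverse]
  simp only [ne_comm]

lemma isProper_map_iff {V' : Type*} {G' : SimpleGraph V'} (f : G →g G') (c' : Sym2 V' → α)
    (p : G.Walk u v) : (p.map f).IsProper c' ↔ p.IsProper (c' ∘ Sym2.map f) := by
  rw [IsProper, IsProper, edges_map, List.map_map]

@[simp] lemma firstColor_reverse (p : G.Walk u v) : p.reverse.firstColor c = p.lastColor c := by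
  rw [firstColor, lastColor, edges_reverse, List.map_reverse, List.head?_reverse]

@[simp] lemma lastColor_reverse (p : G.Walk u v) : p.reverse.lastColor c = p.firstColor c := by
  rw [← firstColor_reverse, reverse_reverse]

lemma firstColor_map {V' : Type*} {G' : SimpleGraph V'} (f : G →g G') (c' : Sym2 V' → α)
    (p : G.Walk u v) : (p.map f).firstColor c' = p.firstColor (c' ∘ Sym2.map f) := by
  rw [firstColor, firstColor, edges_map, List.map_map]

lemma lastColor_map {V' : Type*} {G' : SimpleGraph V'} (f : G →g G') (c' : Sym2 V' → α)
    (p : G.Walk u v) : (p.map f).lastColor c' = p.lastColor (c' ∘ Sym2.map f) := by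
  rw [lastColor, lastColor, edges_map, List.map_map]

lemma lastColor_ne_none (p : G.Walk u v) (huv : u ≠ v) : p.lastColor c ≠ none := by
  simpa [lastColor, edges_eq_nil] using not_nil_of_ne huv

lemma firstColor_append (p : G.Walk u v) (q : G.Walk v w) :
    (p.append q).firstColor c = (p.firstColor c).or (q.firstColor c) := by
  rw [firstColor, firstColor, firstColor, edges_append, List.map_append, List.head?_append]

lemma lastColor_append (p : G.Walk u v) (q : G.Walk v w) :
    (p.append q).lastColor c = (q.lastColor c).or (p.lastColor c) := by
  rw [lastColor, lastColor, lastColor, edges_append, List.map_append, List.getLast?_append]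

@[simp] lemma lastColor_cons (h : G.Adj u v) (p : G.Walk v w) :
    (cons h p).lastColor c = (p.lastColor c).or (some (c s(u, v))) := by
  rw [← nil_append p, ← cons_append, lastColor_append]
  rfl

lemma isPath_append_iff (p : G.Walk u v) (q : G.Walk v w) :
    (p.append q).IsPath ↔ p.IsPath ∧ q.IsPath ∧ ∀ x ∈ p.support, x ∈ q.support → x = v := by
  simp only [isPath_def, support_append, List.nodup_append]
  rw [← q.cons_tail_support, List.nodup_cons]
  simp only [List.mem_cons]
  constructor
  · rintro ⟨hp, hq, hdisj⟩
    refine ⟨hp, ⟨fun hv => hdisj v p.end_mem_support v hv rfl, hq⟩, ?_⟩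
    rintro x hx (rfl | hxq)
    · rfl
    · exact absurd rfl (hdisj x hx x hxq)
  · rintro ⟨hp, ⟨hv, hq⟩, hdisj⟩
    refine ⟨hp, hq, ?_⟩
    rintro x hx y hy rfl
    obtain rfl := hdisj x hx (Or.inr hy)
    exact hv hy

lemma exists_eq_append_of_end_mem {S : Set V} (p : G.Walk u v) (hv : v ∈ S) :
    ∃ z ∈ S, ∃ (p₁ : G.Walk u z) (p₂ : G.Walk z v), p = p₁.append p₂ ∧
      ∀ x ∈ p₁.support, x ∈ S → x = z := by
  induction p with
  | nil => exact ⟨_, hv, nil, nil, rfl, by simp⟩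
  | @cons u' _ _ h p ih =>
    by_cases hu : u' ∈ S
    · exact ⟨u', hu, nil, cons h p, rfl, by simp⟩
    obtain ⟨z, hz, p₁, p₂, rfl, hfirst⟩ := ih hv
    refine ⟨z, hz, cons h p₁, p₂, rfl, ?_⟩
    intro x hx hxS
    rw [support_cons, List.mem_cons] at hx
    rcases hx with rfl | hx
    · exact absurd hxS hu
    · exact hfirst x hx hxS

lemma exists_isPath_isProper_of_mem_support {S : G.Walk v u} (hS : S.IsPath)
    (hSc : S.IsProper c) (huv : G.Adj u v) (hclose : ∀ x ∈ S.lastColor c, c s(u, v) ≠ x)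
    {z w : V} (hz : z ∈ S.support) (hzv : z ≠ v) {T : G.Walk z w} (hT : T.IsPath)
    (hTc : T.IsProper c) (hTS : ∀ x ∈ T.support, x ∈ S.support → x = z) :
    ∃ p : G.Walk v w, p.IsPath ∧ p.IsProper c := by
  classical
  rw [← S.take_spec hz] at hS hSc hclose
  set S₁ := S.takeUntil z hz
  set S₂ := S.dropUntil z hz
  obtain ⟨hS₁, hS₂, hS₁₂⟩ := (isPath_append_iff S₁ S₂).1 hS
  obtain ⟨hS₁c, hS₂c, hjoin⟩ := (isProper_append_iff S₁ S₂).1 hSc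
  by_cases h : ∀ x ∈ S₁.lastColor c, ∀ y ∈ T.firstColor c, x ≠ y
  · refine ⟨S₁.append T, (isPath_append_iff _ _).2 ⟨hS₁, hT, ?_⟩,
      (isProper_append_iff _ _).2 ⟨hS₁c, hTc, h⟩⟩
    exact fun x hx hxT => hTS x hxT (S.support_takeUntil_subset_support hz hx)
  push Not at h
  obtain ⟨a, ha₁, _, haT, rfl⟩ := h
  -- `S₁` cannot be continued by `T`, so go around the cycle the other way, through `s(v, u)`.
  refine ⟨cons huv.symm (S₂.reverse.append T), ?_, ?_⟩
  · refine (cons_isPath_iff _ _).2 ⟨(isPath_append_iff _ _).2 ⟨hS₂.reverse, hT, ?_⟩, ?_⟩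
    · intro x hx hxT
      rw [support_reverse, List.mem_reverse] at hx
      exact hTS x hxT (S.support_dropUntil_subset_support hz hx)
    · rw [support_append, support_reverse, List.mem_append, List.mem_reverse]
      rintro (hv | hv)
      · exact hzv (hS₁₂ v S₁.start_mem_support hv).symm
      · exact hzv (hTS v (List.mem_of_mem_tail hv) S.start_mem_support).symm
  · rw [isProper_cons_iff, firstColor_append, firstColor_reverse, isProper_append_iff,
      lastColor_reverse, isProper_reverse_iff]
    refine ⟨fun x hx => ?_, hS₂c, hTc, fun x hx y hy => ?_⟩
    · rw [Sym2.eq_swap]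
      refine hclose x ((lastColor_append S₁ S₂).symm ▸ ?_)
      rcases Option.or_eq_some_iff.1 hx with hx₂ | ⟨hnil, hxT⟩
      · exact Option.or_eq_some_iff.2 (Or.inl hx₂)
      · obtain rfl := Option.mem_unique hxT haT
        exact Option.or_eq_some_iff.2 (Or.inr ⟨hnil, ha₁⟩)
    · obtain rfl := Option.mem_unique hy haT
      exact (hjoin _ ha₁ x hx).symm

lemma exists_isPath_isProper_of_notMem_support {S : G.Walk v u} (hS : S.IsPath)
    (hSc : S.IsProper c) (huv : G.Adj u v) (hclose : ∀ x ∈ S.lastColor c, c s(u, v) ≠ x)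
    {w : V} {Q : G.Walk w u} (hQ : Q.IsPath) (hQc : Q.IsProper c) (hvQ : v ∉ Q.support) :
    ∃ p : G.Walk v w, p.IsPath ∧ p.IsProper c := by
  obtain ⟨z, hz, R₁, R₂, rfl, hR₁⟩ :=
    Q.exists_eq_append_of_end_mem (S := {x | x ∈ S.support}) S.end_mem_support
  obtain ⟨hR₁p, -, -⟩ := (isPath_append_iff R₁ R₂).1 hQ
  obtain ⟨hR₁c, -, -⟩ := (isProper_append_iff R₁ R₂).1 hQc
  refine exists_isPath_isProper_of_mem_support hS hSc huv hclose hz ?_ hR₁p.reverse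
    ((isProper_reverse_iff R₁).2 hR₁c) fun x hx hxS => hR₁ x (by simpa using hx) hxS
  rintro rfl
  exact hvQ (by simp [support_append, R₁.end_mem_support])

end SimpleGraph.Walk

open SimpleGraph.Walk

section ProperConnection

variable {V : Type*} {G : SimpleGraph V} {k : ℕ}

lemma pc_le_of_properConnColoring {c : Sym2 V → Fin k} (hc : ProperConnColoring G c) :
    pc G ≤ k :=
  Nat.sInf_le ⟨c, hc⟩

lemma exists_properConnColoring_of_pc_eq (h : pc G = k) (hk : k ≠ 0) :
    ∃ c : Sym2 V → Fin k, ProperConnColoring G c := by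
  have hne : {k | ∃ c : Sym2 V → Fin k, ProperConnColoring G c}.Nonempty := by
    by_contra hempty
    rw [Set.not_nonempty_iff_eq_empty] at hempty
    rw [pc, hempty, Nat.sInf_empty] at h
    exact hk h.symm
  exact h ▸ Nat.sInf_mem hne

lemma ProperConnColoring.two_le {c : Sym2 V → Fin k} (hc : ProperConnColoring G c) {a b : V}
    (hab : a ≠ b) (hnadj : ¬ G.Adj a b) : 2 ≤ k := by
  obtain ⟨p, -, hpc⟩ := hc a b
  rw [← Fin.nontrivial_iff_two_le]
  match p with
  | .nil => exact absurd rfl hab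
  | .cons h .nil => exact absurd h hnadj
  | .cons _ (.cons _ _) => exact ⟨_, _, List.rel_of_isChain_cons_cons hpc⟩

lemma exists_ne_not_adj_of_one_lt_pc (h : 1 < pc G) : ∃ a b : V, a ≠ b ∧ ¬ G.Adj a b := by
  by_contra! hcomplete
  refine h.not_ge (pc_le_of_properConnColoring (c := fun _ => (0 : Fin 1)) fun a b => ?_)
  by_cases hab : a = b
  · subst hab
    exact ⟨nil, IsPath.nil, isProper_nil⟩
  · have hadj : G.Adj a b := hcomplete a b hab
    exact ⟨hadj.toWalk, hadj.isPath_toWalk, List.IsChain.singleton _⟩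

lemma pc_eq_two_of_properConnColoring {c : Sym2 V → Fin 2} (hc : ProperConnColoring G c)
    {a b : V} (hab : a ≠ b) (hnadj : ¬ G.Adj a b) : pc G = 2 :=
  (pc_le_of_properConnColoring hc).antisymm
    (le_csInf ⟨2, c, hc⟩ fun _ ⟨_, hc'⟩ => hc'.two_le hab hnadj)

end ProperConnection

section AddVertex

variable {V α : Type*}

def extendColoring [DecidableEq V] (c : Sym2 V → α) (u : V) (γ δ : α) :
    Sym2 (Option V) → α := fun e =>
  if e = s(none, some u) then δ else if none ∈ e then γ else c (e.map (·.getD u))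

lemma extendColoring_comp_map_some [DecidableEq V] (c : Sym2 V → α) (u : V) (γ δ : α) :
    extendColoring c u γ δ ∘ Sym2.map some = c := by
  funext e
  induction e using Sym2.ind
  simp [extendColoring]

lemma extendColoring_none_some_of_ne [DecidableEq V] (c : Sym2 V → α) {u u' : V} (h : u' ≠ u)
    (γ δ : α) :
    extendColoring c u γ δ s(none, some u') = γ := by
  simp [extendColoring, h]

lemma extendColoring_some_none [DecidableEq V] (c : Sym2 V → α) (u : V) (γ δ : α) :
    extendColoring c u γ δ s(some u, none) = δ := by
  simp [extendColoring, Sym2.eq_swap]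

lemma ProperConnColoring.extend_option {k : ℕ} {G : SimpleGraph V} {G' : SimpleGraph (Option V)}
    (hGG' : ∀ a b, G.Adj a b → G'.Adj (some a) (some b)) {c : Sym2 V → Fin k}
    (hc : ProperConnColoring G c) {c' : Sym2 (Option V) → Fin k} (hcc' : c' ∘ Sym2.map some = c)
    (hnew : ∀ w, ∃ p : G'.Walk none (some w), p.IsPath ∧ p.IsProper c') :
    ProperConnColoring G' c' := by
  let F : G →g G' := ⟨some, hGG' _ _⟩
  rintro (_ | a) (_ | b)
  · exact ⟨nil, IsPath.nil, isProper_nil⟩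
  · exact hnew b
  · obtain ⟨p, hp, hpc⟩ := hnew a
    exact ⟨p.reverse, hp.reverse, (isProper_reverse_iff p).2 hpc⟩
  · obtain ⟨p, hp, hpc⟩ := hc a b
    exact ⟨p.map F, hp.map (Option.some_injective V), (isProper_map_iff F c' p).2 (hcc' ▸ hpc)⟩

theorem exists_properConnColoring_option {G : SimpleGraph V} {G' : SimpleGraph (Option V)}
    (hGG' : ∀ a b, G.Adj a b → G'.Adj (some a) (some b)) {c : Sym2 V → Fin 2}
    (hc : ProperConnColoring G c) {u₁ u₂ : V} (h₁₂ : u₁ ≠ u₂) (h₁ : G'.Adj none (some u₁))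
    (h₂ : G'.Adj none (some u₂)) : ∃ c' : Sym2 (Option V) → Fin 2, ProperConnColoring G' c' := by
  classical
  let F : G →g G' := ⟨some, hGG' _ _⟩
  obtain ⟨P, hP, hPc⟩ := hc u₁ u₂
  have hflip : ∀ o : Option (Fin 2), ∀ x ∈ o, o.getD 0 + 1 ≠ x := by
    rintro o x rfl
    revert x
    decide
  set c' := extendColoring c u₂ ((P.firstColor c).getD 0 + 1) ((P.lastColor c).getD 0 + 1)
  have hc'F : c' ∘ Sym2.map F = c := extendColoring_comp_map_some _ _ _ _
  have hc'₁ : c' s(none, some u₁) = (P.firstColor c).getD 0 + 1 :=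
    extendColoring_none_some_of_ne _ h₁₂ _ _
  have hc'₂ : c' s(some u₂, none) = (P.lastColor c).getD 0 + 1 := extendColoring_some_none _ _ _ _
  have hlift : ∀ {a b : V} (p : G.Walk a b), p.IsPath → p.IsProper c →
      (p.map F).IsPath ∧ (p.map F).IsProper c' := fun p hp hpc =>
    ⟨hp.map (Option.some_injective V), (isProper_map_iff F c' p).2 (hc'F ▸ hpc)⟩
  obtain ⟨hPF, hPFc⟩ := hlift P hP hPc
  let S := cons h₁ (P.map F)
  have hS : S.IsPath := (cons_isPath_iff _ _).2 ⟨hPF, by simp [F, Walk.support_map]⟩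
  have hSc : S.IsProper c' := by
    refine (isProper_cons_iff _ _).2 ⟨?_, hPFc⟩
    rw [firstColor_map, hc'F, hc'₁]
    exact hflip _
  have hclose : ∀ x ∈ S.lastColor c', c' s(some u₂, none) ≠ x := by
    obtain ⟨δ, hδ⟩ := Option.ne_none_iff_exists'.1 (P.lastColor_ne_none (c := c) h₁₂)
    rw [lastColor_cons, lastColor_map, hc'F, hδ, hc'₂, hδ]
    exact hflip _
  refine ⟨c', hc.extend_option hGG' hc'F fun w => ?_⟩
  obtain ⟨Q, hQ, hQc⟩ := hc w u₂
  obtain ⟨hQF, hQFc⟩ := hlift Q hQ hQc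
  exact exists_isPath_isProper_of_notMem_support hS hSc h₂.symm hclose hQF hQFc
    (by simp [F, Walk.support_map])

end AddVertex

theorem pc_add_vertex_general {V : Type*} (G : SimpleGraph V)
    (hpc : pc G = 2) (G' : SimpleGraph (Option V))
    (hsub : ∀ a b : V, G'.Adj (some a) (some b) ↔ G.Adj a b)
    (hdeg : 2 ≤ ({w | G'.Adj none w} : Set (Option V)).ncard) :
    pc G' = 2 := by
  obtain ⟨c, hc⟩ := exists_properConnColoring_of_pc_eq hpc two_ne_zero
  obtain ⟨a, b, hab, hnadj⟩ := exists_ne_not_adj_of_one_lt_pc (hpc ▸ one_lt_two)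
  obtain ⟨x₁, hx₁, x₂, hx₂, hx₁₂⟩ := (Set.one_lt_ncard_iff_nontrivial_and_finite.1 hdeg).1
  obtain ⟨u₁, rfl⟩ := Option.ne_none_iff_exists'.1 (G'.ne_of_adj hx₁).symm
  obtain ⟨u₂, rfl⟩ := Option.ne_none_iff_exists'.1 (G'.ne_of_adj hx₂).symm
  obtain ⟨c', hc'⟩ := exists_properConnColoring_option (fun a b => (hsub a b).2) hc
    (fun h => hx₁₂ (congrArg some h)) hx₁ hx₂
  exact pc_eq_two_of_properConnColoring hc' ((Option.some_injective V).ne hab)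
    fun h => hnadj ((hsub a b).1 h)

/-- Adding a new vertex `v` joined by at least two edges to a connected graph `G`
with `pc(G) = 2` yields a graph with proper connection number 2. -/
theorem pc_add_vertex {V : Type*} (G : SimpleGraph V) (hG : G.Connected)
    (hpc : pc G = 2) (G' : SimpleGraph (Option V))
    (hsub : ∀ a b : V, G'.Adj (some a) (some b) ↔ G.Adj a b)
    (hdeg : 2 ≤ ({w | G'.Adj none w} : Set (Option V)).ncard) :
    pc G' = 2 :=
  pc_add_vertex_general G hpc G' hsub hdeg
end

section
/- For every odd integer n ≥ 5, there exists a connected graph G on n vertices such that d(x) + d(y) ≥ n/2 − 1 for every pair of nonadjacent vertices x, y, but pc(G) = 3. (Namely, take a triangle G1 and two complete graphs G2, G3 on (n−3)/2 vertices, pick vertices v_i ∈ G_i, and join v1 to v2 and v1 to v3 by edges.) -/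
open SimpleGraph

/-!
The graph consists of a triangle `z t₁ t₂` and two cliques `A ∋ a`, `B ∋ b`, with `z` joined
to `a` and `b`. Every edge leaving `A`, `B` or `{t₁, t₂}` ends at `z`, so a path from `a` to `b`
is forced to start `a z b`, and a path from `x ∈ {a, b}` to `t ∈ {t₁, t₂}` to start `x z t` or
`x z o t` (`o` the other triangle vertex). With two colours `az` and `bz` differ, and then the four
paths from `{a, b}` to `{t₁, t₂}` cannot all be proper. Three colours suffice: colour `za` with 0,
`zb` with 1 and every other edge with 2. Each vertex is reached from `z` by a proper path inside its
block whose first colour depends only on the block, and two such paths into different blocks glue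
at `z` to a proper path.
-/

namespace SimpleGraph

variable {V : Type*} {G : SimpleGraph V}

def IsAttachedAt (G : SimpleGraph V) (S : Set V) (z : V) : Prop :=
  ∀ ⦃x y⦄, G.Adj x y → x ∈ S → y ∉ S → y = z

theorem IsAttachedAt.mem_support {S : Set V} {z u v : V} (hS : G.IsAttachedAt S z)
    (p : G.Walk u v) (hu : u ∈ S) (hv : v ∉ S) : z ∈ p.support := by
  obtain ⟨d, hd, hfst, hsnd⟩ := p.exists_boundary_dart S hu hv
  rw [← hS d.adj hfst hsnd]
  exact p.dart_snd_mem_support_of_mem_darts hd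

theorem IsAttachedAt.mem_of_isPath_cons {S : Set V} {z w v : V} (hS : G.IsAttachedAt S z)
    {h : G.Adj z w} {p : G.Walk w v} (hp : (Walk.cons h p).IsPath) (hw : w ∈ S) : v ∈ S := by
  by_contra hv
  exact ((Walk.cons_isPath_iff h p).mp hp).2 (hS.mem_support p hw hv)

theorem Walk.IsPath.reverse_append {z u v : V} {p : G.Walk z u} {q : G.Walk z v}
    (hp : p.IsPath) (hq : q.IsPath) (hpq : ∀ x ∈ p.support, x ∈ q.support → x = z) :
    (p.reverse.append q).IsPath := by
  rw [Walk.isPath_def, Walk.support_append, Walk.support_reverse, List.nodup_append']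
  refine ⟨List.nodup_reverse.mpr hp.support_nodup, hq.support_nodup.sublist (List.tail_sublist _),
    ?_⟩
  rw [List.disjoint_reverse_left]
  intro x hxp hxq
  have hz := hq.support_nodup
  rw [← q.cons_tail_support, List.nodup_cons] at hz
  exact hz.1 (hpq x hxp (List.mem_of_mem_tail hxq) ▸ hxq)

theorem IsClique.ncard_sub_one_le_ncard_neighborSet [Finite V] {K : Set V} (hK : G.IsClique K)
    {v : V} (hv : v ∈ K) : K.ncard - 1 ≤ (G.neighborSet v).ncard := by
  rw [← Set.ncard_sdiff_singleton_of_mem hv]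
  exact Set.ncard_le_ncard (fun w hw => hK hv hw.1 (Ne.symm hw.2)) (Set.toFinite _)

end SimpleGraph

theorem Fin.ncard_setOf_le_val_lt {n a b : ℕ} (hb : b ≤ n) :
    {i : Fin n | a ≤ i.val ∧ i.val < b}.ncard = b - a := by
  rw [show {i : Fin n | a ≤ i.val ∧ i.val < b} = Fin.val ⁻¹' Set.Ico a b from rfl,
    Set.ncard_preimage_of_injective_subset_range Fin.val_injective, Set.ncard_Ico_nat]
  intro i hi
  exact ⟨⟨i, hi.2.trans_le hb⟩, rfl⟩

section ProperConnection

variable {V : Type*} {G : SimpleGraph V} {k : ℕ}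

theorem properConnColoring_iff {c : Sym2 V → Fin k} :
    ProperConnColoring G c ↔
      ∀ u v : V, ∃ p : G.Walk u v, p.IsPath ∧ (p.edges.map c).IsChain (· ≠ ·) :=
  Iff.rfl

theorem ProperConnColoring.comp_injective {l : ℕ} {c : Sym2 V → Fin k}
    (hc : ProperConnColoring G c) {f : Fin k → Fin l} (hf : Function.Injective f) :
    ProperConnColoring G (f ∘ c) := by
  intro u v
  obtain ⟨p, hp, hch⟩ := hc u v
  refine ⟨p, hp, ?_⟩
  rw [← List.map_map]
  exact (List.isChain_map f).2 (hch.imp fun _ _ h => hf.ne h)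

theorem pc_eq_succ (hex : ∃ c : Sym2 V → Fin (k + 1), ProperConnColoring G c)
    (hnot : ∀ c : Sym2 V → Fin k, ¬ ProperConnColoring G c) : pc G = k + 1 := by
  refine le_antisymm (Nat.sInf_le hex) ?_
  by_contra! hlt
  obtain ⟨c, hc⟩ := Nat.sInf_mem
    (⟨k + 1, hex⟩ : {k | ∃ c : Sym2 V → Fin k, ProperConnColoring G c}.Nonempty)
  exact hnot _ (hc.comp_injective (Fin.castLE_injective (Nat.lt_succ_iff.mp hlt)))

def IsProperSpoke (c : Sym2 V → Fin k) (entry : V → Fin k) {z v : V} (q : G.Walk z v) : Prop :=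
  q.IsPath ∧ (q.edges.map c).IsChain (· ≠ ·) ∧ (∀ w ∈ q.support, w = z ∨ entry w = entry v) ∧
    ∀ a ∈ (q.edges.map c).head?, a = entry v

theorem ProperConnColoring.of_spokes {c : Sym2 V → Fin k} {entry : V → Fin k} (z : V)
    (hclique : ∀ u v, u ≠ v → entry u = entry v → G.Adj u v)
    (hspoke : ∀ v, ∃ q : G.Walk z v, IsProperSpoke c entry q) :
    ProperConnColoring G c := by
  refine properConnColoring_iff.mpr fun u v => ?_
  by_cases huv : u = v
  · subst huv
    exact ⟨.nil, .nil, List.isChain_nil⟩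
  by_cases hentry : entry u = entry v
  · exact ⟨.cons (hclique u v huv hentry) .nil, by simp [huv], by simp⟩
  obtain ⟨p, hp, hpc, hps, hph⟩ := hspoke u
  obtain ⟨q, hq, hqc, hqs, hqh⟩ := hspoke v
  refine ⟨p.reverse.append q, hp.reverse_append hq fun x hxp hxq => ?_, ?_⟩
  · rcases hps x hxp with hx | hx
    · exact hx
    · exact (hqs x hxq).resolve_right fun h => hentry (hx.symm.trans h)
  · rw [Walk.edges_append, Walk.edges_reverse, List.map_append, List.map_reverse,
      List.isChain_append, List.isChain_reverse, List.getLast?_reverse]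
    refine ⟨hpc.imp fun _ _ h => h.symm, hqc, fun a ha b hb => ?_⟩
    rw [hph a ha, hqh b hb]
    exact hentry

end ProperConnection

def SameBlock (p i j : ℕ) : Prop := (i < 3 ↔ j < 3) ∧ (i < 3 + p ↔ j < 3 + p)

/-- Vertices `0, 1, 2` form the triangle, `[3, 3 + p)` and `[3 + p, n)` the two cliques, and the
hub `0` is joined to `3` and `3 + p`. -/
def sharpGraph (n p : ℕ) : SimpleGraph (Fin n) :=
  SimpleGraph.fromRel fun x y => SameBlock p x y ∨ x.val = 0 ∧ (y.val = 3 ∨ y.val = 3 + p)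

namespace SharpGraph

variable {n p : ℕ}

theorem adj_iff {x y : Fin n} : (sharpGraph n p).Adj x y ↔ x.val ≠ y.val ∧
    (SameBlock p x y ∨ x.val = 0 ∧ (y.val = 3 ∨ y.val = 3 + p) ∨
      y.val = 0 ∧ (x.val = 3 ∨ x.val = 3 + p)) := by
  simp only [sharpGraph, fromRel_adj, ne_eq, Fin.ext_iff, SameBlock]
  constructor <;> rintro ⟨h, h'⟩ <;> refine ⟨h, ?_⟩ <;> omega

theorem isAttachedAt_block_diff {x : Fin n} (hx : x.val = 3 ∨ x.val = 3 + p) :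
    (sharpGraph n p).IsAttachedAt {w | SameBlock p x w ∧ w ≠ x} x := by
  intro u w h hu hw
  simp only [Set.mem_ofPred_eq, adj_iff, SameBlock, ne_eq, Fin.ext_iff] at h hu hw ⊢
  omega

theorem isAttachedAt_hub {z : Fin n} (hz : z.val = 0) (w : Fin n) :
    (sharpGraph n p).IsAttachedAt {u | SameBlock p w u ∧ u ≠ z} z := by
  intro u v h hu hv
  simp only [Set.mem_ofPred_eq, adj_iff, SameBlock, ne_eq, Fin.ext_iff] at h hu hv ⊢
  omega

theorem eq_hub_of_isPath_cons {x z w v : Fin n} (hx : x.val = 3 ∨ x.val = 3 + p) (hz : z.val = 0)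
    {h : (sharpGraph n p).Adj x w} {q : (sharpGraph n p).Walk w v} (hq : (Walk.cons h q).IsPath)
    (hv : ¬ SameBlock p x v) : w = z := by
  by_contra hwz
  refine hv ((isAttachedAt_block_diff hx).mem_of_isPath_cons hq ⟨?_, h.ne.symm⟩).1
  rw [adj_iff] at h
  rw [Fin.ext_iff] at hwz
  simp only [SameBlock] at h ⊢
  omega

theorem sameBlock_of_isPath_cons {z w v : Fin n} (hz : z.val = 0)
    {h : (sharpGraph n p).Adj z w} {q : (sharpGraph n p).Walk w v} (hq : (Walk.cons h q).IsPath) :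
    SameBlock p w v :=
  ((isAttachedAt_hub hz w).mem_of_isPath_cons hq ⟨⟨Iff.rfl, Iff.rfl⟩, h.ne.symm⟩).1

section Paths

variable {k : ℕ} (c : Sym2 (Fin n) → Fin k)

theorem color_ne_of_isPath {a b z : Fin n} (hp : 1 ≤ p) (ha : a.val = 3) (hb : b.val = 3 + p)
    (hz : z.val = 0) (P : (sharpGraph n p).Walk a b) (hP : P.IsPath)
    (hc : (P.edges.map c).IsChain (· ≠ ·)) : c s(a, z) ≠ c s(z, b) := by
  cases P with
  | nil => omega
  | @cons _ w _ h Q =>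
    obtain rfl := eq_hub_of_isPath_cons (Or.inl ha) hz hP (by simp only [SameBlock]; omega)
    cases Q with
    | nil => omega
    | @cons _ w' _ h' R =>
      have hwb := sameBlock_of_isPath_cons hz hP.of_cons
      rw [adj_iff] at h'
      simp only [SameBlock] at hwb h'
      obtain rfl : w' = b := Fin.ext (by omega)
      simp only [Walk.edges_cons, List.map_cons, List.isChain_cons_cons] at hc
      exact hc.1

theorem color_ne_or_of_isPath {x t o z : Fin n} (hx : x.val = 3 ∨ x.val = 3 + p)
    (ht : t.val = 1 ∨ t.val = 2) (ho : o.val + t.val = 3) (hz : z.val = 0)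
    (P : (sharpGraph n p).Walk x t) (hP : P.IsPath) (hc : (P.edges.map c).IsChain (· ≠ ·)) :
    c s(x, z) ≠ c s(z, t) ∨ c s(x, z) ≠ c s(z, o) ∧ c s(z, o) ≠ c s(o, t) := by
  cases P with
  | nil => omega
  | @cons _ w _ h Q =>
    obtain rfl := eq_hub_of_isPath_cons hx hz hP (by simp only [SameBlock]; omega)
    cases Q with
    | nil => omega
    | @cons _ w' _ h' R =>
      have hwt := sameBlock_of_isPath_cons hz hP.of_cons
      rw [adj_iff] at h'
      simp only [SameBlock] at hwt
      by_cases hwt' : w'.val = t.val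
      · obtain rfl := Fin.ext hwt'
        simp only [Walk.edges_cons, List.map_cons, List.isChain_cons_cons] at hc
        exact Or.inl hc.1
      obtain rfl : w' = o := Fin.ext (by omega)
      cases R with
      | nil => omega
      | @cons _ w'' _ h'' R' =>
        have hzR := ((Walk.cons_isPath_iff _ _).mp hP.of_cons).2
        have hw''z : w''.val ≠ w.val := fun e => hzR (by simp [← Fin.ext e])
        rw [adj_iff] at h''
        simp only [SameBlock] at h''
        obtain rfl : w'' = t := Fin.ext (by omega)
        simp only [Walk.edges_cons, List.map_cons, List.isChain_cons_cons] at hc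
        exact Or.inr ⟨hc.1, hc.2.1⟩

end Paths

theorem not_properConnColoring_fin_two (hp : 1 ≤ p) (hpn : 3 + p < n)
    (c : Sym2 (Fin n) → Fin 2) : ¬ ProperConnColoring (sharpGraph n p) c := by
  intro hc
  rw [properConnColoring_iff] at hc
  obtain ⟨z, hz⟩ : ∃ v : Fin n, v.val = 0 := ⟨⟨0, by omega⟩, rfl⟩
  obtain ⟨t₁, ht₁⟩ : ∃ v : Fin n, v.val = 1 := ⟨⟨1, by omega⟩, rfl⟩
  obtain ⟨t₂, ht₂⟩ : ∃ v : Fin n, v.val = 2 := ⟨⟨2, by omega⟩, rfl⟩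
  obtain ⟨a, ha⟩ : ∃ v : Fin n, v.val = 3 := ⟨⟨3, by omega⟩, rfl⟩
  obtain ⟨b, hb⟩ : ∃ v : Fin n, v.val = 3 + p := ⟨⟨3 + p, hpn⟩, rfl⟩
  have hab := (hc a b).elim fun P hP => color_ne_of_isPath c hp ha hb hz P hP.1 hP.2
  have ha₁ := (hc a t₁).elim fun P hP =>
    color_ne_or_of_isPath c (.inl ha) (.inl ht₁) (by omega) hz P hP.1 hP.2 (o := t₂)
  have ha₂ := (hc a t₂).elim fun P hP =>
    color_ne_or_of_isPath c (.inl ha) (.inr ht₂) (by omega) hz P hP.1 hP.2 (o := t₁)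
  have hb₁ := (hc b t₁).elim fun P hP =>
    color_ne_or_of_isPath c (.inr hb) (.inl ht₁) (by omega) hz P hP.1 hP.2 (o := t₂)
  have hb₂ := (hc b t₂).elim fun P hP =>
    color_ne_or_of_isPath c (.inr hb) (.inr ht₂) (by omega) hz P hP.1 hP.2 (o := t₁)
  rw [Sym2.eq_swap (a := z) (b := b)] at hab
  rw [Sym2.eq_swap (a := t₂) (b := t₁)] at ha₁ hb₁
  revert hab ha₁ ha₂ hb₁ hb₂
  generalize c s(a, z) = α, c s(b, z) = β, c s(z, t₁) = γ₁, c s(z, t₂) = γ₂, c s(t₁, t₂) = δ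
  revert α β γ₁ γ₂ δ
  decide

def hubColoring (p : ℕ) (e : Sym2 (Fin n)) : Fin 3 :=
  if e.map Fin.val = s(0, 3) then 0 else if e.map Fin.val = s(0, 3 + p) then 1 else 2

def entryColor (p : ℕ) (v : Fin n) : Fin 3 :=
  if v.val < 3 then 2 else if v.val < 3 + p then 0 else 1

theorem hubColoring_mk (x y : Fin n) : hubColoring p s(x, y) =
    if x.val = 0 ∧ y.val = 3 ∨ x.val = 3 ∧ y.val = 0 then 0
    else if x.val = 0 ∧ y.val = 3 + p ∨ x.val = 3 + p ∧ y.val = 0 then 1 else 2 := by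
  simp [hubColoring]

theorem adj_of_entryColor_eq {u v : Fin n} (huv : u ≠ v) (h : entryColor p u = entryColor p v) :
    (sharpGraph n p).Adj u v := by
  rw [adj_iff, SameBlock]
  rw [← Fin.val_ne_iff] at huv
  unfold entryColor at h
  split_ifs at h <;> omega

theorem isProperSpoke_cons_nil (hp : 1 ≤ p) {z v : Fin n} (hz : z.val = 0)
    (h : (sharpGraph n p).Adj z v) :
    IsProperSpoke (hubColoring p) (entryColor p) (.cons h .nil) := by
  refine ⟨by simp [h.ne], by simp, by simp, ?_⟩
  rw [adj_iff, SameBlock] at h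
  simp only [Walk.edges_cons, Walk.edges_nil, List.map_cons, List.map_nil, List.head?_cons,
    Option.mem_some_iff, forall_eq', hubColoring_mk, entryColor]
  split_ifs <;> omega

theorem isProperSpoke_cons_cons_nil (hp : 1 ≤ p) {z x v : Fin n} (hz : z.val = 0)
    (hx : x.val = 3 ∧ 3 < v.val ∧ v.val < 3 + p ∨ x.val = 3 + p ∧ 3 + p < v.val)
    (h : (sharpGraph n p).Adj z x) (h' : (sharpGraph n p).Adj x v) :
    IsProperSpoke (hubColoring p) (entryColor p) (.cons h (.cons h' .nil)) := by
  refine ⟨?_, ?_, ?_, ?_⟩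
  · simp [Fin.ext_iff]
    omega
  · simp only [Walk.edges_cons, Walk.edges_nil, List.map_cons, List.map_nil,
      List.isChain_pair, hubColoring_mk]
    split_ifs <;> omega
  · intro w hw
    simp only [Walk.support_cons, Walk.support_nil, List.mem_cons, List.not_mem_nil,
      or_false] at hw
    rcases hw with rfl | rfl | rfl
    · exact .inl rfl
    · refine .inr ?_
      simp only [entryColor]
      split_ifs <;> omega
    · exact .inr rfl
  · simp only [Walk.edges_cons, List.map_cons, List.head?_cons, Option.mem_some_iff,
      forall_eq', hubColoring_mk, entryColor]
    split_ifs <;> omega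

theorem exists_isProperSpoke (hp : 1 ≤ p) (hpn : 3 + p < n) {z : Fin n} (hz : z.val = 0)
    (v : Fin n) :
    ∃ q : (sharpGraph n p).Walk z v, IsProperSpoke (hubColoring p) (entryColor p) q := by
  by_cases hvz : v = z
  · subst hvz
    exact ⟨.nil, by simp [IsProperSpoke]⟩
  by_cases hzv : (sharpGraph n p).Adj z v
  · exact ⟨_, isProperSpoke_cons_nil hp hz hzv⟩
  rw [adj_iff, SameBlock] at hzv
  rw [Fin.ext_iff] at hvz
  obtain ⟨x, hx⟩ : ∃ x : Fin n,
      x.val = 3 ∧ 3 < v.val ∧ v.val < 3 + p ∨ x.val = 3 + p ∧ 3 + p < v.val := by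
    by_cases hv : v.val < 3 + p
    · exact ⟨⟨3, by omega⟩, .inl ⟨rfl, by omega, hv⟩⟩
    · exact ⟨⟨3 + p, hpn⟩, .inr ⟨rfl, by omega⟩⟩
  have hzx : (sharpGraph n p).Adj z x := by
    rw [adj_iff]
    omega
  have hxv : (sharpGraph n p).Adj x v := by
    rw [adj_iff, SameBlock]
    omega
  exact ⟨_, isProperSpoke_cons_cons_nil hp hz hx hzx hxv⟩

theorem properConnColoring_hubColoring (hp : 1 ≤ p) (hpn : 3 + p < n) :
    ProperConnColoring (sharpGraph n p) (hubColoring p) :=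
  ProperConnColoring.of_spokes ⟨0, by omega⟩ (fun _ _ => adj_of_entryColor_eq)
    (exists_isProperSpoke hp hpn rfl)

theorem connected (hp : 1 ≤ p) (hpn : 3 + p < n) : (sharpGraph n p).Connected :=
  (connected_iff_exists_forall_reachable _).mpr
    ⟨⟨0, by omega⟩, fun v => (exists_isProperSpoke hp hpn rfl v).elim fun q _ => ⟨q⟩⟩

theorem pc_eq_three (hp : 1 ≤ p) (hpn : 3 + p < n) : pc (sharpGraph n p) = 3 :=
  pc_eq_succ ⟨_, properConnColoring_hubColoring hp hpn⟩ (not_properConnColoring_fin_two hp hpn)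

theorem ncard_block_sub_one_le {a b : ℕ} (hb : b ≤ n)
    (hblock : ∀ i j, a ≤ i → i < b → a ≤ j → j < b → SameBlock p i j) {v : Fin n}
    (hv : a ≤ v.val ∧ v.val < b) : b - a - 1 ≤ ((sharpGraph n p).neighborSet v).ncard := by
  have hK : (sharpGraph n p).IsClique {i : Fin n | a ≤ i.val ∧ i.val < b} := fun i hi j hj hij =>
    adj_iff.mpr ⟨Fin.val_ne_iff.mpr hij, .inl (hblock _ _ hi.1 hi.2 hj.1 hj.2)⟩
  simpa [Fin.ncard_setOf_le_val_lt hb] using hK.ncard_sub_one_le_ncard_neighborSet hv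

theorem le_ncard_neighborSet (hp : 1 ≤ p) (hpn : 3 + p < n) (v : Fin n) :
    1 ≤ ((sharpGraph n p).neighborSet v).ncard ∧
      (v.val < 3 → 2 ≤ ((sharpGraph n p).neighborSet v).ncard) ∧
      (3 ≤ v.val → v.val < 3 + p → p - 1 ≤ ((sharpGraph n p).neighborSet v).ncard) ∧
      (3 + p ≤ v.val → n - 3 - p - 1 ≤ ((sharpGraph n p).neighborSet v).ncard) := by
  have : Nontrivial (Fin n) := Fin.nontrivial_iff_two_le.mpr (by omega)
  refine ⟨(Set.ncard_pos (Set.toFinite _)).mpr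
      ((connected hp hpn).preconnected.exists_adj_of_nontrivial v), fun hv => ?_,
    fun hv hv' => ?_, fun hv => ?_⟩
  · exact ncard_block_sub_one_le (a := 0) (b := 3) (by omega) (by simp only [SameBlock]; omega)
      ⟨Nat.zero_le _, hv⟩
  · simpa using ncard_block_sub_one_le (b := 3 + p) (by omega) (by simp only [SameBlock]; omega)
      ⟨hv, hv'⟩
  · simpa [Nat.sub_sub] using ncard_block_sub_one_le le_rfl (by simp only [SameBlock]; omega)
      ⟨hv, v.isLt⟩

theorem le_two_mul_ncard_add_ncard (hp : 1 ≤ p) (hpn : 3 + p < n)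
    (hsize : if n = 7 then p = 3 else n = 2 * p + 3) {x y : Fin n} (hxy : x ≠ y)
    (hadj : ¬ (sharpGraph n p).Adj x y) :
    n ≤ 2 * (((sharpGraph n p).neighborSet x).ncard +
      ((sharpGraph n p).neighborSet y).ncard) + 2 := by
  have hx := le_ncard_neighborSet hp hpn x
  have hy := le_ncard_neighborSet hp hpn y
  rw [adj_iff, SameBlock] at hadj
  rw [← Fin.val_ne_iff] at hxy
  split_ifs at hsize <;> omega

end SharpGraph

/-- Sharpness of the degree sum bound: for every odd `n ≥ 5` there is a connected graph
on `n` vertices with `d(x) + d(y) ≥ n/2 − 1` for all nonadjacent `x ≠ y`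
but with proper connection number 3. -/
theorem degreeSum_sharp (n : ℕ) (hn : 5 ≤ n) (hodd : Odd n) :
    ∃ G : SimpleGraph (Fin n), G.Connected ∧
      (∀ x y : Fin n, x ≠ y → ¬ G.Adj x y →
        (n : ℝ) / 2 - 1 ≤ (G.neighborSet x).ncard + (G.neighborSet y).ncard) ∧
      pc G = 3 := by
  have hodd' := Nat.odd_iff.mp hodd
  -- For `n = 7` the balanced split `p = 2` fails: the two vertices of the `K₂`s other than `a`
  -- and `b` are nonadjacent with degree sum `2 < 7 / 2 - 1`.
  obtain ⟨p, hsize⟩ : ∃ p, if n = 7 then p = 3 else n = 2 * p + 3 :=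
    ⟨if n = 7 then 3 else (n - 3) / 2, by split_ifs <;> omega⟩
  have hp : 1 ≤ p := by split_ifs at hsize <;> omega
  have hpn : 3 + p < n := by split_ifs at hsize <;> omega
  refine ⟨sharpGraph n p, SharpGraph.connected hp hpn, fun x y hxy hadj => ?_,
    SharpGraph.pc_eq_three hp hpn⟩
  have key := SharpGraph.le_two_mul_ncard_add_ncard hp hpn hsize hxy hadj
  have key' := (Nat.cast_le (α := ℝ)).mpr key
  push_cast at key'
  linarith
end

section
/- There exists a connected bipartite graph G on n = 19 vertices such that d(x) + d(y) ≥ n/4 + 1 for every pair of nonadjacent vertices x, y, but pc(G) = 3. (Namely, take three copies of K_{3,3}, a new vertex v0, pick one vertex v_i in each copy, and join v0 to each v_i by an edge.) -/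
/-!
Let `v₀` be joined to one vertex `vₜ` of each of three copies of `K₃,₃`. A path between `vᵢ` and
`vⱼ` must go through `v₀`, entering and leaving along `vᵢv₀` and `v₀vⱼ`, so the three edges at
`v₀` get pairwise distinct colours and `pc ≥ 3`. Conversely, colour each `K₃,₃` properly with three
colours and `v₀vₜ` with colour `t`: every path inside a copy is then properly coloured, and a path
through `vₜ` only has to avoid the single edge at `vₜ` of colour `t`. Every vertex has degree at
least `3`, and `3 + 3 ≥ 19/4 + 1`.
-/

open SimpleGraph

namespace SimpleGraph

variable {V : Type*} {G : SimpleGraph V}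

theorem ncard_neighborSet_eq_degree (v : V) [Fintype (G.neighborSet v)] :
    (G.neighborSet v).ncard = G.degree v := by
  rw [← Nat.card_coe_set_eq, Nat.card_eq_fintype_card, card_neighborSet_eq_degree]

/-- Distinct neighbours of `w` lie in different components of `G - w`. -/
def SeparatesNeighbors (G : SimpleGraph V) (w : V) : Prop :=
  ∀ ⦃x y : V⦄, G.Adj w x → G.Adj w y → ∀ p : G.Walk x y, w ∉ p.support → x = y

theorem Walk.apply_eq_of_notMem_support {α : Type*} {w : V} (f : V → α)
    (hf : ∀ x y, G.Adj x y → x ≠ w → y ≠ w → f x = f y) :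
    ∀ {u v : V} (p : G.Walk u v), w ∉ p.support → f u = f v
  | _, _, .nil, _ => rfl
  | _, _, .cons h p, hw => by
    rw [Walk.support_cons, List.mem_cons, not_or] at hw
    exact (hf _ _ h (Ne.symm hw.1) fun e => hw.2 (e ▸ p.start_mem_support)).trans
      (p.apply_eq_of_notMem_support f hf hw.2)

theorem separatesNeighbors_of_apply_eq {α : Type*} {w : V} (f : V → α)
    (hf : ∀ x y, G.Adj x y → x ≠ w → y ≠ w → f x = f y)
    (hinj : ∀ x y, G.Adj w x → G.Adj w y → f x = f y → x = y) : G.SeparatesNeighbors w :=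
  fun x y hx hy p hw => hinj x y hx hy (p.apply_eq_of_notMem_support f hf hw)

theorem SeparatesNeighbors.exists_edges_eq_cons {w v : V} (hsep : G.SeparatesNeighbors w)
    (hv : G.Adj w v) {p : G.Walk w v} (hp : p.IsPath) : ∃ l, p.edges = s(w, v) :: l := by
  obtain ⟨x, hx, q, rfl⟩ := p.exists_eq_cons_of_ne hv.ne
  rw [Walk.cons_isPath_iff] at hp
  obtain rfl := hsep hx hv q hp.2
  exact ⟨q.edges, Walk.edges_cons _ _⟩

end SimpleGraph

section ProperConnection

variable {V : Type*} {G : SimpleGraph V} {k : ℕ} {c : Sym2 V → Fin k}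

theorem ProperConnColoring.connected [Nonempty V] (hc : ProperConnColoring G c) :
    G.Connected :=
  ⟨fun u v => (hc u v).elim fun p _ => p.reachable⟩

theorem pc_eq_of_properConnColoring (hc : ProperConnColoring G c)
    (hmin : ∀ m (c' : Sym2 V → Fin m), ProperConnColoring G c' → k ≤ m) : pc G = k :=
  le_antisymm (Nat.sInf_le ⟨c, hc⟩) (le_csInf ⟨k, c, hc⟩ fun _ ⟨c', hc'⟩ => hmin _ c' hc')

theorem ProperConnColoring.of_routes (col : V → V → Fin k) (hcol : ∀ x y, col x y = col y x)
    (route : V → V → List V)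
    (hroute : ∀ u v, (u :: route u v).IsChain G.Adj ∧
      (u :: route u v).getLast (List.cons_ne_nil _ _) = v ∧ (u :: route u v).Nodup ∧
      (List.zipWith col (u :: route u v) (route u v)).IsChain (· ≠ ·)) :
    ProperConnColoring G (Sym2.lift ⟨col, hcol⟩) := by
  intro u v
  obtain ⟨hadj, hlast, hnodup, hcolors⟩ := hroute u v
  refine ⟨(Walk.ofSupport _ (List.cons_ne_nil _ _) hadj).copy (List.head_cons ..) hlast, ?_, ?_⟩
  · rwa [Walk.isPath_def, Walk.support_copy, Walk.support_ofSupport]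
  · rwa [Walk.edges_copy, Walk.edges_eq_zipWith_support, Walk.support_ofSupport,
      List.map_zipWith]

/-- The edges at `w` on a proper path between two of its neighbours are consecutive. -/
theorem ProperConnColoring.apply_ne_of_separatesNeighbors (hc : ProperConnColoring G c)
    {w x y : V} (hsep : G.SeparatesNeighbors w) (hx : G.Adj w x) (hy : G.Adj w y)
    (hxy : x ≠ y) : c s(w, x) ≠ c s(w, y) := by
  classical
  obtain ⟨p, hp, hcolors⟩ := hc x y
  have hw : w ∈ p.support := by
    by_contra hw
    exact hxy (hsep hx hy p hw)
  obtain ⟨l₁, hl₁⟩ := hsep.exists_edges_eq_cons hx (hp.takeUntil hw).reverse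
  obtain ⟨l₂, hl₂⟩ := hsep.exists_edges_eq_cons hy (hp.dropUntil hw)
  have hedges : p.edges = l₁.reverse ++ s(w, x) :: s(w, y) :: l₂ := by
    rw [← p.take_spec hw, Walk.edges_append, ← List.reverse_reverse (p.takeUntil w hw).edges,
      ← Walk.edges_reverse, hl₁, hl₂]
    simp
  rw [hedges] at hcolors
  refine List.isChain_pair.mp (hcolors.infix ⟨(l₁.reverse).map c, l₂.map c, ?_⟩)
  simp

theorem ProperConnColoring.degree_le (hc : ProperConnColoring G c) {w : V}
    [Fintype (G.neighborSet w)] (hsep : G.SeparatesNeighbors w) : G.degree w ≤ k := by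
  have hinj : Set.InjOn (fun x => c s(w, x)) (G.neighborFinset w : Set V) := by
    intro x hx y hy hxy
    by_contra hne
    exact hc.apply_ne_of_separatesNeighbors hsep ((mem_neighborFinset _ _ _).mp hx)
      ((mem_neighborFinset _ _ _).mp hy) hne hxy
  simpa using Finset.card_le_card_of_injOn _ (fun _ _ => Finset.mem_univ _) hinj

end ProperConnection

namespace HubK33

/- Vertex `0` is `v₀`; copy `t < 3` of `K₃,₃` is `{6t+1, …, 6t+6}`, with slots `0, 1, 2` on one side
and `3, 4, 5` on the other, and `vₜ` is its slot `0`. The truncated subtraction gives the hub the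
junk values `block 0 = slot 0 = 0`, which is why `graph` mentions `0` explicitly. -/
def block (x : Fin 19) : ℕ := (x.val - 1) / 6
def slot (x : Fin 19) : ℕ := (x.val - 1) % 6

def graph : SimpleGraph (Fin 19) := SimpleGraph.fromRel fun x y =>
  x = 0 ∧ y ≠ 0 ∧ slot y = 0 ∨ x ≠ 0 ∧ y ≠ 0 ∧ block x = block y ∧ slot x < 3 ∧ 3 ≤ slot y

instance : DecidableRel graph.Adj := fun _ _ => inferInstanceAs (Decidable (_ ∧ _))

/- Inside a copy, `slot x + slot y mod 3` is a proper colouring of `K₃,₃` (a Latin square). The edge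
at `vₜ` coloured like `v₀vₜ` is the one to slot `3 + t`, which the routes through `vₜ` avoid. -/
def edgeColor (x y : Fin 19) : Fin 3 :=
  if x = 0 then Fin.ofNat 3 (block y)
  else if y = 0 then Fin.ofNat 3 (block x)
  else Fin.ofNat 3 (slot x + slot y)

def vertex (t s : ℕ) : Fin 19 := Fin.ofNat 19 (1 + 6 * t + s)

def routeFromHub (v : Fin 19) : List (Fin 19) :=
  let t := block v
  if slot v = 0 then [v]
  else if slot v < 3 then [vertex t 0, vertex t (3 + (t + 1) % 3), v]
  else if slot v ≠ 3 + t then [vertex t 0, v]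
  else [vertex t 0, vertex t (3 + (t + 1) % 3), vertex t 1, v]

def routeInBlock (u v : Fin 19) : List (Fin 19) :=
  if slot u < 3 ↔ slot v < 3 then [vertex (block u) (if slot u < 3 then 3 else 0), v] else [v]

def route (u v : Fin 19) : List (Fin 19) :=
  if u = v then []
  else if u = 0 then routeFromHub v
  else if v = 0 then (0 :: routeFromHub u).reverse.tail
  else if block u = block v then routeInBlock u v
  else (0 :: routeFromHub u).reverse.tail ++ routeFromHub v

set_option maxRecDepth 10000 in
theorem route_spec : ∀ u v : Fin 19, (u :: route u v).IsChain graph.Adj ∧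
    (u :: route u v).getLast (List.cons_ne_nil _ _) = v ∧ (u :: route u v).Nodup ∧
    (List.zipWith edgeColor (u :: route u v) (route u v)).IsChain (· ≠ ·) := by
  decide

theorem edgeColor_comm : ∀ x y : Fin 19, edgeColor x y = edgeColor y x := by decide

theorem properConnColoring :
    ProperConnColoring graph (Sym2.lift ⟨edgeColor, edgeColor_comm⟩) :=
  .of_routes edgeColor edgeColor_comm route route_spec

theorem separatesNeighbors : graph.SeparatesNeighbors 0 :=
  separatesNeighbors_of_apply_eq block (by decide) (by decide)

theorem degree_zero : graph.degree 0 = 3 := by decide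

theorem three_le_degree : ∀ x, 3 ≤ graph.degree x := by decide

theorem colorable : graph.Colorable 2 :=
  ⟨.mk (fun x => if x ≠ 0 ∧ slot x < 3 then 1 else 0) (by decide)⟩

theorem pc_eq : pc graph = 3 :=
  pc_eq_of_properConnColoring properConnColoring fun _ _ hc =>
    degree_zero ▸ hc.degree_le separatesNeighbors

end HubK33

/-- Sharpness of the bipartite degree sum bound: there is a connected bipartite graph
on `n = 19` vertices with `d(x) + d(y) ≥ n/4 + 1` for all nonadjacent `x ≠ y`
but with proper connection number 3. -/
theorem bipartite_degreeSum_sharp :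
    ∃ G : SimpleGraph (Fin 19), G.Connected ∧ G.Colorable 2 ∧
      (∀ x y : Fin 19, x ≠ y → ¬ G.Adj x y →
        (19 : ℝ) / 4 + 1 ≤ (G.neighborSet x).ncard + (G.neighborSet y).ncard) ∧
      pc G = 3 := by
  refine ⟨HubK33.graph, HubK33.properConnColoring.connected, HubK33.colorable,
    fun x y _ _ => ?_, HubK33.pc_eq⟩
  have hdeg : (6 : ℝ) ≤ HubK33.graph.degree x + HubK33.graph.degree y := by
    exact_mod_cast add_le_add (HubK33.three_le_degree x) (HubK33.three_le_degree y)
  rw [ncard_neighborSet_eq_degree, ncard_neighborSet_eq_degree]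
  linarith
end

section
/- Let G be a connected graph on n vertices and let H be a bipartite spanning subgraph of G with the maximum number of edges among all bipartite spanning subgraphs. If e = u1 u2 is a cut-edge of H and I1, I2 are the two components of H − e, then the number of edges of G with one end in I1 and the other in I2 is at most 2. -/
open SimpleGraph

/-!
Write `K = H - e` and let `I₁ ∋ u₁`, `I₂ ∋ u₂` be the two sides. A 2-coloring `c` of `K` gives a
second one `c'` by swapping the colors on `I₂`, and every crossing edge is properly colored by
exactly one of `c`, `c'`. Adding to `K` all crossing edges properly colored by `c` (resp. `c'`)
gives a bipartite subgraph of `G`, which by maximality has at most `|K| + 1` edges; so each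
of the two classes contains at most one crossing edge.
-/

namespace SimpleGraph

variable {V : Type*} {G H K : SimpleGraph V}

lemma isAcyclic_edge (u v : V) : (edge u v).IsAcyclic := by
  simpa using (isAcyclic_sup_fromEdgeSet_iff (G := ⊥) (u := u) (v := v)).2 ⟨isAcyclic_bot, by simp⟩

lemma edgeSet_finite_of_forall_colorable_two_ncard_le
    (hmax : ∀ H' : SimpleGraph V, H' ≤ G → H'.Colorable 2 →
      H'.edgeSet.ncard ≤ H.edgeSet.ncard)
    {x y : V} (hxy : G.Adj x y) : H.edgeSet.Finite := by
  by_contra hinf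
  have := hmax (edge x y) ((edge_le_iff G).2 (Or.inr hxy)) (isAcyclic_edge x y).colorable_two
  rw [edgeSet_edge_of_ne hxy.ne, Set.ncard_singleton, Set.Infinite.ncard hinf] at this
  omega

lemma Coloring.colorable_sup_fromEdgeSet {n : ℕ} (c : K.Coloring (Fin n)) {T : Set (Sym2 V)}
    (hT : ∀ f ∈ T, ¬(f.map c).IsDiag) : (K ⊔ fromEdgeSet T).Colorable n := by
  refine ⟨Coloring.mk c fun {a b} hab => ?_⟩
  rcases hab with hab | ⟨habT, -⟩
  · exact c.valid hab
  · simpa [Sym2.mk_isDiag_iff] using hT _ habT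

lemma Coloring.exists_perm_on {α : Type*} (c : K.Coloring α) (σ : Equiv.Perm α) {A : Set V}
    (hA : ∀ ⦃a b⦄, K.Adj a b → a ∈ A → b ∈ A) :
    ∃ c' : K.Coloring α, (∀ v ∈ A, c' v = σ (c v)) ∧ ∀ v ∉ A, c' v = c v := by
  classical
  refine ⟨Coloring.mk (fun v => if v ∈ A then σ (c v) else c v) fun {a b} hab => ?_,
    fun v hv => if_pos hv, fun v hv => if_neg hv⟩
  have hA' : a ∈ A ↔ b ∈ A := ⟨hA hab, hA hab.symm⟩
  by_cases ha : a ∈ A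
  · simpa [ha, hA'.1 ha] using c.valid hab
  · simpa [ha, mt hA'.2 ha] using c.valid hab

lemma ncard_le_one_of_forall_not_isDiag_map {n : ℕ} (hHG : H ≤ G)
    (hmax : ∀ H' : SimpleGraph V, H' ≤ G → H'.Colorable n →
      H'.edgeSet.ncard ≤ H.edgeSet.ncard)
    (hfin : H.edgeSet.Finite) (e : Sym2 V) (c : (H.deleteEdges {e}).Coloring (Fin n))
    {T : Set (Sym2 V)} (hTG : T ⊆ G.edgeSet) (hTK : Disjoint T (H.deleteEdges {e}).edgeSet)
    (hTc : ∀ f ∈ T, ¬(f.map c).IsDiag) : T.ncard ≤ 1 := by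
  by_cases hTfin : T.Finite
  swap
  · simp [Set.Infinite.ncard hTfin]
  have hKG : H.deleteEdges {e} ⊔ fromEdgeSet T ≤ G :=
    sup_le ((deleteEdges_le _).trans hHG) ((fromEdgeSet_le G).2 (Set.sdiff_subset.trans hTG))
  have hedges :
      (H.deleteEdges {e} ⊔ fromEdgeSet T).edgeSet = (H.deleteEdges {e}).edgeSet ∪ T := by
    rw [edgeSet_sup, edgeSet_fromEdgeSet, sdiff_eq_left.2]
    exact Set.disjoint_left.2 fun f hf => G.not_isDiag_of_mem_edgeSet (hTG hf)
  have hH : H.edgeSet.ncard - 1 ≤ (H.deleteEdges {e}).edgeSet.ncard := by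
    rw [edgeSet_deleteEdges]
    exact Set.pred_ncard_le_ncard_sdiff_singleton _ _
  have := hmax _ hKG (c.colorable_sup_fromEdgeSet hTc)
  rw [hedges, Set.ncard_union_eq hTK.symm (hfin.subset (edgeSet_mono (deleteEdges_le _))) hTfin]
    at this
  omega

end SimpleGraph

theorem maxBipartiteSubgraph_crossing_le_two_general {V : Type*} (G H : SimpleGraph V)
    (hHG : H ≤ G) (hbip : H.Colorable 2)
    (hmax : ∀ H' : SimpleGraph V, H' ≤ G → H'.Colorable 2 →
      H'.edgeSet.ncard ≤ H.edgeSet.ncard)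
    (u₁ u₂ : V) (he : H.IsBridge s(u₁, u₂)) :
    ({f ∈ G.edgeSet | ∃ x y : V, f = s(x, y) ∧
        (H.deleteEdges {s(u₁, u₂)}).Reachable u₁ x ∧
        (H.deleteEdges {s(u₁, u₂)}).Reachable u₂ y} : Set (Sym2 V)).ncard ≤ 2 := by
  set K := H.deleteEdges {s(u₁, u₂)}
  set S : Set (Sym2 V) := {f ∈ G.edgeSet | ∃ x y : V, f = s(x, y) ∧
    K.Reachable u₁ x ∧ K.Reachable u₂ y}
  have hsep : ¬K.Reachable u₁ u₂ := isBridge_iff.1 he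
  rcases S.eq_empty_or_nonempty with hS | ⟨f, hfG, x, y, rfl, -⟩
  · simp [hS]
  have hfin := edgeSet_finite_of_forall_colorable_two_ncard_le hmax hfG
  obtain ⟨c⟩ := hbip.mono_left (deleteEdges_le _)
  obtain ⟨c', hc'₂, hc'₁⟩ := c.exists_perm_on (Equiv.addRight 1) (A := {v | K.Reachable u₂ v})
    fun _ _ hab ha => ha.trans hab.reachable
  have hSK : Disjoint S K.edgeSet := Set.disjoint_left.2 fun
    | _, ⟨_, _, _, rfl, hx, hy⟩, hxy => hsep (hx.trans (hxy.reachable.trans hy.symm))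
  have hproper : ∀ f ∈ S, ¬(f.map c).IsDiag ∨ ¬(f.map c').IsDiag := by
    rintro _ ⟨_, x, y, rfl, hx, hy⟩
    simp only [Sym2.map_mk, Sym2.mk_isDiag_iff]
    rw [hc'₁ x fun hx' => hsep (hx.trans hx'.symm), hc'₂ y hy, Equiv.coe_addRight]
    generalize c x = a, c y = b
    revert a b; decide
  have hclass := fun (d : K.Coloring (Fin 2)) =>
    ncard_le_one_of_forall_not_isDiag_map hHG hmax hfin _ d
    (T := {f ∈ S | ¬(f.map d).IsDiag}) (fun _ hf => hf.1.1) (hSK.mono_left (Set.sep_subset _ _))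
    fun _ hf => hf.2
  rw [← Set.sep_eq_self_iff_mem_true.2 hproper, Set.sep_or]
  exact (Set.ncard_union_le _ _).trans (add_le_add (hclass c) (hclass c'))

/-- If `H` is a bipartite spanning subgraph of a connected graph `G` with the maximum
number of edges and `e = u₁u₂` is a cut-edge of `H` with components `I₁, I₂` of `H − e`,
then at most 2 edges of `G` join `I₁` to `I₂`. -/
theorem maxBipartiteSubgraph_crossing_le_two {V : Type*} (G H : SimpleGraph V)
    (hG : G.Connected) (hHG : H ≤ G) (hbip : H.Colorable 2)
    (hmax : ∀ H' : SimpleGraph V, H' ≤ G → H'.Colorable 2 →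
      H'.edgeSet.ncard ≤ H.edgeSet.ncard)
    (u₁ u₂ : V) (he : H.IsBridge s(u₁, u₂)) :
    ({f ∈ G.edgeSet | ∃ x y : V, f = s(x, y) ∧
        (H.deleteEdges {s(u₁, u₂)}).Reachable u₁ x ∧
        (H.deleteEdges {s(u₁, u₂)}).Reachable u₂ y} : Set (Sym2 V)).ncard ≤ 2 :=
  maxBipartiteSubgraph_crossing_le_two_general G H hHG hbip hmax u₁ u₂ he
end

section
/- If G is a noncomplete connected graph on n vertices with δ(G) ≥ (n−1)/2, then pc(G) = 2. -/
open SimpleGraph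

/-
Take a longest path `a = v₀, …, v_m = b`. By maximality every neighbour of `a` and of `b` lies on
it, so if it missed a vertex, `deg a + deg b ≥ 2δ ≥ n - 1 ≥ m + 1` and pigeonhole gives `i` with
`a ~ v_{i+1}` and `b ~ v_i`. Then `v₀ … v_i v_m … v_{i+1} v₀` is a cycle through the path's vertices,
and connectivity provides an edge leaving it, which yields a longer path. Hence `G` has a
Hamiltonian path, and colouring its edges alternately gives every pair of vertices a properly
coloured subpath; one colour cannot suffice since two nonadjacent vertices need a path with two
consecutive edges.
-/

namespace List

variable {α : Type*} [DecidableEq α] {l : List α} {w : α}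

theorem idxOf_pos_of_head?_eq {a : α} (ha : l.head? = some a) (hw : w ∈ l) (hwa : w ≠ a) :
    0 < l.idxOf w := by
  refine Nat.pos_of_ne_zero fun h ↦ hwa ?_
  have := getElem?_idxOf hw
  rwa [h, ← head?_eq_getElem?, ha, Option.some_inj, eq_comm] at this

theorem idxOf_add_one_lt_length_of_getLast?_eq {b : α} (hb : l.getLast? = some b) (hw : w ∈ l)
    (hwb : w ≠ b) : l.idxOf w + 1 < l.length := by
  have hlt := idxOf_lt_length_iff.2 hw
  refine lt_of_le_of_ne hlt fun h ↦ hwb ?_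
  have := getElem?_idxOf hw
  rwa [show l.idxOf w = l.length - 1 by omega, ← getLast?_eq_getElem?, hb, Option.some_inj,
    eq_comm] at this

theorem Nodup.isChain_ne_map_idxOf_mod_two (hl : l.Nodup) :
    (l.map fun e ↦ Fin.ofNat 2 (l.idxOf e)).IsChain (· ≠ ·) := by
  rw [isChain_iff_getElem]
  intro i hi
  simp only [getElem_map, hl.idxOf_getElem, ne_eq, Fin.ext_iff, Fin.val_ofNat]
  omega

end List

section

variable {V : Type*} {G : SimpleGraph V}

theorem ProperConnColoring.one_lt_of_ne_top {k : ℕ} {c : Sym2 V → Fin k}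
    (hc : ProperConnColoring G c) (hG : G ≠ ⊤) : 1 < k := by
  obtain ⟨u, v, huv, hnadj⟩ := ne_top_iff_exists_not_adj.1 hG
  obtain ⟨p, -, hp⟩ := hc u v
  obtain ⟨e, f, hef⟩ : ∃ e f, c e ≠ c f := by
    cases p with
    | nil => exact absurd rfl huv
    | cons h q =>
      cases q with
      | nil => exact absurd h hnadj
      | cons _ _ => exact ⟨_, _, (List.isChain_cons_cons.1 hp).1⟩
  simpa using Fintype.one_lt_card_iff.2 ⟨_, _, hef⟩

theorem pc_eq_two_of_ne_top (hG : G ≠ ⊤) {c : Sym2 V → Fin 2} (hc : ProperConnColoring G c) :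
    pc G = 2 :=
  le_antisymm (Nat.sInf_le ⟨c, hc⟩) (le_csInf ⟨2, c, hc⟩ fun _ ⟨_, hk⟩ ↦ hk.one_lt_of_ne_top hG)

namespace SimpleGraph

namespace Walk

variable [DecidableEq V] {a b : V}

theorem IsPath.exists_isPath_edges_infix {p : G.Walk a b} (hp : p.IsPath) {u v : V}
    (hu : u ∈ p.support) (hv : v ∈ p.support) :
    ∃ q : G.Walk u v, q.IsPath ∧ (q.edges <:+: p.edges ∨ q.edges.reverse <:+: p.edges) := by
  rw [← p.take_spec hu, mem_support_append_iff] at hv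
  rcases hv with hv | hv
  · refine ⟨((p.takeUntil u hu).dropUntil v hv).reverse, ((hp.takeUntil hu).dropUntil hv).reverse,
      Or.inr ?_⟩
    rw [edges_reverse, List.reverse_reverse]
    exact ((p.takeUntil u hu).edges_dropUntil_suffix_edges hv).isInfix.trans
      (p.edges_takeUntil_prefix_edges hu).isInfix
  · refine ⟨(p.dropUntil u hu).takeUntil v hv, (hp.dropUntil hu).takeUntil hv, Or.inl ?_⟩
    exact ((p.dropUntil u hu).edges_takeUntil_prefix_edges hv).isInfix.trans
      (p.edges_dropUntil_suffix_edges hu).isInfix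

theorem IsHamiltonian.properConnColoring {p : G.Walk a b} (hp : p.IsHamiltonian) {k : ℕ}
    {c : Sym2 V → Fin k} (hc : (p.edges.map c).IsChain (· ≠ ·)) : ProperConnColoring G c := by
  intro u v
  obtain ⟨q, hq, hinf | hinf⟩ :=
    hp.isPath.exists_isPath_edges_infix (hp.mem_support u) (hp.mem_support v)
  · exact ⟨q, hq, hc.infix (hinf.map c)⟩
  · have hrev := hc.infix (hinf.map c)
    rw [List.map_reverse, List.isChain_reverse] at hrev
    exact ⟨q, hq, hrev.imp fun _ _ h ↦ h.symm⟩

end Walk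

structure IsLongestPathList (G : SimpleGraph V) (l : List V) : Prop where
  nodup : l.Nodup
  isChain : l.IsChain G.Adj
  length_le : ∀ m : List V, m.Nodup → m.IsChain G.Adj → m.length ≤ l.length

theorem exists_isLongestPathList [Finite V] (G : SimpleGraph V) :
    ∃ l : List V, G.IsLongestPathList l := by
  set lengths := {n | ∃ m : List V, m.Nodup ∧ m.IsChain G.Adj ∧ m.length = n}
  have hbdd : BddAbove lengths := by
    have := Fintype.ofFinite V
    exact ⟨Fintype.card V, fun _ ⟨m, hm, _, hlen⟩ ↦ hlen ▸ hm.length_le_card⟩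
  obtain ⟨l, hl, hc, hlen⟩ := Nat.sSup_mem (s := lengths) ⟨0, [], List.nodup_nil, .nil, rfl⟩ hbdd
  exact ⟨l, hl, hc, fun m hm hmc ↦ hlen ▸ le_csSup hbdd ⟨m, hm, hmc, rfl⟩⟩

theorem IsLongestPathList.reverse {l : List V} (hl : G.IsLongestPathList l) :
    G.IsLongestPathList l.reverse := by
  obtain ⟨hnd, hc, hmax⟩ := hl
  refine ⟨List.nodup_reverse.2 hnd, ?_, by simpa using hmax⟩
  rw [List.isChain_reverse]
  exact hc.imp fun _ _ h ↦ h.symm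

theorem IsLongestPathList.mem_of_adj_head {l : List V} (hl : G.IsLongestPathList l) {a w : V}
    (ha : l.head? = some a) (haw : G.Adj a w) : w ∈ l := by
  obtain ⟨hnd, hc, hmax⟩ := hl
  by_contra hw
  have hext : (w :: l).IsChain G.Adj := by
    refine List.isChain_cons.2 ⟨fun y hy ↦ ?_, hc⟩
    rw [ha, Option.mem_some_iff] at hy
    exact hy ▸ haw.symm
  simpa using hmax (w :: l) (List.nodup_cons.2 ⟨hw, hnd⟩) hext

theorem IsLongestPathList.mem_of_adj_getLast {l : List V} (hl : G.IsLongestPathList l) {b w : V}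
    (hb : l.getLast? = some b) (hbw : G.Adj b w) : w ∈ l :=
  List.mem_reverse.1 <| hl.reverse.mem_of_adj_head (by rwa [List.head?_reverse]) hbw

/- `(c ++ c).IsChain G.Adj` says that `c` runs around a cycle of `G`: every rotation of `c` is an
infix of `c ++ c`, hence a path. -/
theorem isChain_cycle_of_crossing {l₁ l₂ : List V} (hc : (l₁ ++ l₂).IsChain G.Adj) {a b x z : V}
    (ha : (l₁ ++ l₂).head? = some a) (hb : (l₁ ++ l₂).getLast? = some b)
    (hx : l₁.getLast? = some x) (hz : l₂.head? = some z) (hbx : G.Adj b x) (haz : G.Adj a z) :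
    (l₁ ++ l₂.reverse ++ (l₁ ++ l₂.reverse)).IsChain G.Adj := by
  have hl₁ : l₁ ≠ [] := by rintro rfl; simp at hx
  have hl₂ : l₂ ≠ [] := by rintro rfl; simp at hz
  rw [List.head?_append_of_ne_nil _ hl₁] at ha
  rw [List.getLast?_append_of_ne_nil _ hl₂] at hb
  obtain ⟨hc₁, hc₂, -⟩ := List.isChain_append.1 hc
  have hc₂' : l₂.reverse.IsChain G.Adj := List.isChain_reverse.2 (hc₂.imp fun _ _ h ↦ h.symm)
  have hcyc : (l₁ ++ l₂.reverse).IsChain G.Adj := by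
    refine List.isChain_append.2 ⟨hc₁, hc₂', ?_⟩
    simpa [hx, hb] using hbx.symm
  refine List.isChain_append.2 ⟨hcyc, hcyc, ?_⟩
  simpa [List.getLast?_append_of_ne_nil, List.head?_append_of_ne_nil, hl₁, hl₂, ha, hz]
    using haz.symm

theorem exists_longer_of_isChain_append_self {c : List V} (hc : (c ++ c).IsChain G.Adj)
    (hnd : c.Nodup) {x y : V} (hx : x ∈ c) (hy : y ∉ c) (hxy : G.Adj x y) :
    ∃ m : List V, m.Nodup ∧ m.IsChain G.Adj ∧ m.length = c.length + 1 := by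
  obtain ⟨c₁, c₂, rfl⟩ := List.append_of_mem hx
  have hperm : (x :: (c₂ ++ c₁)).Perm (c₁ ++ x :: c₂) := by
    simpa using (List.perm_append_comm (l₁ := x :: c₂) (l₂ := c₁))
  have hrot : (x :: (c₂ ++ c₁)).IsChain G.Adj := hc.infix ⟨c₁, x :: c₂, by simp⟩
  refine ⟨y :: x :: (c₂ ++ c₁), ?_, ?_, by simpa using hperm.length_eq⟩
  · exact List.nodup_cons.2 ⟨fun h ↦ hy (hperm.mem_iff.1 h), hperm.nodup_iff.2 hnd⟩
  · exact List.isChain_cons_cons.2 ⟨hxy.symm, hrot⟩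

theorem exists_crossing [Fintype V] [DecidableRel G.Adj] {l : List V} {a b : V}
    (ha : l.head? = some a) (hb : l.getLast? = some b) (hna : ∀ w, G.Adj a w → w ∈ l)
    (hnb : ∀ w, G.Adj b w → w ∈ l) (hlen : l.length ≤ G.degree a + G.degree b) :
    ∃ l₁ l₂ x z, l = l₁ ++ l₂ ∧ l₁.getLast? = some x ∧ l₂.head? = some z ∧
      G.Adj b x ∧ G.Adj a z := by
  classical
  -- `A` and `B` hold the positions `i` with `a ~ l[i + 1]` and `b ~ l[i]` respectively.
  set A := (G.neighborFinset a).image fun w ↦ l.idxOf w - 1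
  set B := (G.neighborFinset b).image l.idxOf
  have hA : A ⊆ Finset.range (l.length - 1) := by
    simp only [A, Finset.image_subset_iff, mem_neighborFinset, Finset.mem_range]
    intro w hw
    have := l.idxOf_pos_of_head?_eq ha (hna w hw) hw.ne'
    have := List.idxOf_lt_length_iff.2 (hna w hw)
    omega
  have hB : B ⊆ Finset.range (l.length - 1) := by
    simp only [B, Finset.image_subset_iff, mem_neighborFinset, Finset.mem_range]
    intro w hw
    have := l.idxOf_add_one_lt_length_of_getLast?_eq hb (hnb w hw) hw.ne'
    omega
  have hAcard : A.card = G.degree a := by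
    rw [← card_neighborFinset_eq_degree]
    refine Finset.card_image_of_injOn fun w hw w' hw' h ↦ ?_
    simp only [Finset.mem_coe, mem_neighborFinset] at hw hw'
    have := l.idxOf_pos_of_head?_eq ha (hna w hw) hw.ne'
    have := l.idxOf_pos_of_head?_eq ha (hna w' hw') hw'.ne'
    exact (List.idxOf_inj (hna w hw)).1 (by omega)
  have hBcard : B.card = G.degree b := by
    rw [← card_neighborFinset_eq_degree]
    refine Finset.card_image_of_injOn fun w hw w' _ h ↦ ?_
    exact (List.idxOf_inj (hnb w ((mem_neighborFinset ..).1 hw))).1 h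
  obtain ⟨i, hi⟩ : (A ∩ B).Nonempty := by
    rw [← Finset.card_pos]
    have hunion := Finset.card_le_card (Finset.union_subset hA hB)
    rw [Finset.card_range] at hunion
    have := Finset.card_union_add_card_inter A B
    have := List.length_pos_of_mem (List.mem_of_mem_head? ha)
    omega
  simp only [Finset.mem_inter, A, B, Finset.mem_image, mem_neighborFinset] at hi
  obtain ⟨⟨z, haz, hz⟩, x, hbx, rfl⟩ := hi
  have hza := l.idxOf_pos_of_head?_eq ha (hna z haz) haz.ne'
  refine ⟨l.take (l.idxOf x + 1), l.drop (l.idxOf x + 1), x, z, (List.take_append_drop _ _).symm,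
    ?_, ?_, hbx, haz⟩
  · simp [List.getLast?_take, List.getElem?_idxOf (hnb x hbx)]
  · rw [List.head?_drop, ← hz, Nat.sub_add_cancel hza, List.getElem?_idxOf (hna z haz)]

theorem IsLongestPathList.forall_mem [Fintype V] [DecidableRel G.Adj] (hG : G.Connected)
    (hδ : Fintype.card V ≤ 2 * G.minDegree + 1) {l : List V} (hl : G.IsLongestPathList l)
    (v : V) : v ∈ l := by
  by_contra hv
  have hne : l ≠ [] := List.ne_nil_of_length_pos <|
    hl.length_le [v] (List.nodup_singleton v) (List.isChain_singleton v)
  have ha := List.head?_eq_some_head hne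
  have hb := List.getLast?_eq_some_getLast hne
  have hlen : l.length + 1 ≤ Fintype.card V := (List.nodup_cons.2 ⟨hv, hl.nodup⟩).length_le_card
  have hdeg := add_le_add (G.minDegree_le_degree (l.head hne))
    (G.minDegree_le_degree (l.getLast hne))
  obtain ⟨l₁, l₂, x, z, rfl, hx, hz, hbx, haz⟩ := exists_crossing ha hb
    (fun _ ↦ hl.mem_of_adj_head ha) (fun _ ↦ hl.mem_of_adj_getLast hb) (by omega)
  have hcyc := isChain_cycle_of_crossing hl.isChain ha hb hx hz hbx haz
  have hperm : (l₁ ++ l₂.reverse).Perm (l₁ ++ l₂) := (List.reverse_perm _).append_left _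
  obtain ⟨d, -, hd, hd'⟩ := (hG.preconnected _ v).some.exists_boundary_dart
    {w | w ∈ l₁ ++ l₂.reverse} (hperm.mem_iff.2 (List.head_mem hne)) (mt hperm.mem_iff.1 hv)
  obtain ⟨m, hm, hmc, hmlen⟩ :=
    exists_longer_of_isChain_append_self hcyc (hperm.nodup_iff.2 hl.nodup) hd hd' d.adj
  have := hl.length_le m hm hmc
  rw [hmlen, hperm.length_eq] at this
  omega

theorem Connected.exists_isHamiltonian_of_card_le [Fintype V] [DecidableEq V]
    [DecidableRel G.Adj] (hG : G.Connected) (hδ : Fintype.card V ≤ 2 * G.minDegree + 1) :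
    ∃ (a b : V) (p : G.Walk a b), p.IsHamiltonian := by
  obtain ⟨l, hl⟩ := G.exists_isLongestPathList
  have hne : l ≠ [] := List.ne_nil_of_mem (hl.forall_mem hG hδ hG.nonempty.some)
  refine ⟨_, _, Walk.ofSupport l hne hl.isChain, Walk.IsPath.isHamiltonian_of_mem ?_ fun w ↦ ?_⟩
  · rw [Walk.isPath_def, Walk.support_ofSupport]
    exact hl.nodup
  · rw [Walk.support_ofSupport]
    exact hl.forall_mem hG hδ w

end SimpleGraph

end

/-- A noncomplete connected graph on `n` vertices with `δ(G) ≥ (n−1)/2`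
has proper connection number 2. -/
theorem pc_eq_two_of_large_minDegree {V : Type*} [Fintype V] [DecidableEq V]
    (G : SimpleGraph V) [DecidableRel G.Adj]
    (hG : G.Connected) (hnc : G ≠ ⊤)
    (hdeg : ((Fintype.card V : ℝ) - 1) / 2 ≤ G.minDegree) :
    pc G = 2 := by
  have hδ : Fintype.card V ≤ 2 * G.minDegree + 1 := by
    rw [div_le_iff₀ two_pos] at hdeg
    exact_mod_cast (by linarith : (Fintype.card V : ℝ) ≤ 2 * G.minDegree + 1)
  obtain ⟨a, b, p, hp⟩ := hG.exists_isHamiltonian_of_card_le hδ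
  exact pc_eq_two_of_ne_top hnc
    (hp.properConnColoring hp.isPath.isTrail.edges_nodup.isChain_ne_map_idxOf_mod_two)
end

section
/- Let G be a connected graph whose bridge-block tree G* has a vertex of degree at least 3. If L and L' are two distinct leaf-blocks of G with unique incident bridges b_L and b_{L'} in a maximum bipartite spanning subgraph H of G, and |E_G(L, G \ V(L))| ≤ 2 with b_L ∈ E_G(L, G \ V(L)), then |E_G(L, L')| ≤ 1. -/
open SimpleGraph

/-- The set of edges of `G` with one end in `X` and the other in `Y`. -/
def EBetween {V : Type*} (G : SimpleGraph V) (X Y : Set V) : Set (Sym2 V) :=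
  {e | ∃ x y : V, e = s(x, y) ∧ G.Adj x y ∧ x ∈ X ∧ y ∈ Y}

/-- The block of `H` containing `v`: the vertex set of the connected component of `v`
in the graph obtained from `H` by deleting all bridges. -/
def blockOf {V : Type*} (H : SimpleGraph V) (v : V) : Set V :=
  {w | (H.deleteEdges {e | H.IsBridge e}).Reachable v w}

/-- The set of bridges of `H` incident with the vertex set `L`. -/
def incidentBridges {V : Type*} (H : SimpleGraph V) (L : Set V) : Set (Sym2 V) :=
  {e | H.IsBridge e ∧ ∃ x ∈ e, x ∈ L}

lemma mem_blockOf_self {V : Type*} (H : SimpleGraph V) (v : V) : v ∈ blockOf H v :=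
  Reachable.refl v

lemma blockOf_eq_of_mem {V : Type*} (H : SimpleGraph V) {v w : V} (h : w ∈ blockOf H v) :
    blockOf H v = blockOf H w := by
  ext x
  simp only [blockOf, Set.mem_setOf_eq] at *
  exact ⟨fun hx => h.symm.trans hx, fun hx => h.trans hx⟩

lemma sym2_mem_finite {V : Type*} (e : Sym2 V) : {x | x ∈ e}.Finite := by
  induction e using Sym2.ind with
  | _ a b =>
    have : {x | x ∈ s(a, b)} ⊆ {a, b} := by
      intro x hx
      rcases Sym2.mem_iff.mp hx with h | h <;> simp [h]
    exact ((Set.finite_singleton b).insert a).subset this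

lemma finite_of_max_bip {V : Type*} (G H : SimpleGraph V)
    (hG : G.Connected) (hHG : H ≤ G) (hHconn : H.Connected)
    (hmax : ∀ H' : SimpleGraph V, H' ≤ G → H'.Colorable 2 →
      H'.edgeSet.ncard ≤ H.edgeSet.ncard) : Finite V := by
  by_contra hfin
  have : Infinite V := not_finite_iff_infinite.mp hfin
  -- H.edgeSet is infinite
  have hEinf : H.edgeSet.Infinite := by
    intro hE
    have hcov : (⋃ e ∈ H.edgeSet, {x | x ∈ e}).Finite :=
      hE.biUnion (fun e _ => sym2_mem_finite e)
    obtain ⟨u⟩ := hHconn.nonempty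
    have hfin2 : ((⋃ e ∈ H.edgeSet, {x | x ∈ e}) ∪ {u}).Finite :=
      hcov.union (Set.finite_singleton u)
    obtain ⟨w, hw⟩ := hfin2.infinite_compl.nonempty
    simp only [Set.mem_compl_iff, Set.mem_union, Set.mem_singleton_iff, not_or] at hw
    have hwu : w ≠ u := hw.2
    obtain ⟨p⟩ := (hHconn.preconnected w u)
    cases p with
    | nil => exact hwu rfl
    | cons h q =>
      exact hw.1 (Set.mem_biUnion (H.mem_edgeSet.mpr h) (Sym2.mem_mk_left _ _))
  -- get an edge of G
  have ⟨e, he⟩ : H.edgeSet.Nonempty := hEinf.nonempty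
  induction e using Sym2.ind with
  | _ a c =>
    have hadj : G.Adj a c := hHG he
    have hac : a ≠ c := hadj.ne
    set H' : SimpleGraph V := SimpleGraph.fromEdgeSet {s(a, c)} with hH'
    have hle : H' ≤ G := by
      intro x y hxy
      rw [hH', fromEdgeSet_adj] at hxy
      obtain ⟨h1, h2⟩ := hxy
      simp only [Set.mem_singleton_iff, Sym2.eq, Sym2.rel_iff', Prod.mk.injEq,
        Prod.swap_prod_mk] at h1
      rcases h1 with ⟨rfl, rfl⟩ | ⟨rfl, rfl⟩
      · exact hadj
      · exact hadj.symm
    have hcol : H'.Colorable 2 := by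
      classical
      refine ⟨⟨fun x => if x = a then 0 else 1, ?_⟩⟩
      intro x y hxy
      rw [hH', fromEdgeSet_adj] at hxy
      obtain ⟨h1, h2⟩ := hxy
      simp only [Set.mem_singleton_iff, Sym2.eq, Sym2.rel_iff', Prod.mk.injEq,
        Prod.swap_prod_mk] at h1
      rcases h1 with ⟨rfl, rfl⟩ | ⟨rfl, rfl⟩ <;> simp [hac, hac.symm]
    have h1 : H'.edgeSet = {s(a, c)} := by
      rw [hH', edgeSet_fromEdgeSet]
      ext e
      simp only [Set.mem_diff, Set.mem_singleton_iff, Set.mem_setOf_eq]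
      constructor
      · rintro ⟨rfl, _⟩; rfl
      · rintro rfl; exact ⟨rfl, by simp [Sym2.isDiag_iff_proj_eq, hac]⟩
    have := hmax H' hle hcol
    rw [h1, Set.ncard_singleton, hEinf.ncard] at this
    omega

/-- Let `H` be a maximum bipartite spanning subgraph of a connected graph `G`, whose
bridge-block tree has a vertex of degree at least 3. If `L` and `L'` are distinct
leaf-blocks with unique incident bridges `bL`, `bL'`, and `|E_G(L, V ∖ L)| ≤ 2` with
`bL ∈ E_G(L, V ∖ L)`, then `|E_G(L, L')| ≤ 1`. -/
theorem leafBlocks_at_most_one_edge {V : Type*} (G H : SimpleGraph V)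
    (hG : G.Connected) (hHG : H ≤ G) (hHconn : H.Connected) (hbip : H.Colorable 2)
    (hmax : ∀ H' : SimpleGraph V, H' ≤ G → H'.Colorable 2 →
      H'.edgeSet.ncard ≤ H.edgeSet.ncard)
    (hstar : ∃ v : V, 3 ≤ (incidentBridges H (blockOf H v)).ncard)
    (L L' : Set V) (hL : ∃ v, L = blockOf H v) (hL' : ∃ v, L' = blockOf H v)
    (hne : L ≠ L') (bL bL' : Sym2 V)
    (hbL : incidentBridges H L = {bL}) (hbL' : incidentBridges H L' = {bL'})
    (hcut : (EBetween G L Lᶜ).ncard ≤ 2) (hmem : bL ∈ EBetween G L Lᶜ) :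
    (EBetween G L L').ncard ≤ 1 := by
  have hVfin : Finite V := finite_of_max_bip G H hG hHG hHconn hmax
  by_contra hcon
  push_neg at hcon
  obtain ⟨v₀, rfl⟩ := hL
  obtain ⟨v₁, rfl⟩ := hL'
  set L := blockOf H v₀
  set L' := blockOf H v₁
  -- disjointness
  have hdisj : ∀ x, x ∈ L → x ∈ L' → False := by
    intro x hx hx'
    exact hne ((blockOf_eq_of_mem H hx).trans (blockOf_eq_of_mem H hx').symm)
  -- subset
  have hsub : EBetween G L L' ⊆ EBetween G L Lᶜ := by
    rintro e ⟨x, y, rfl, hadj, hx, hy⟩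
    exact ⟨x, y, rfl, hadj, hx, fun hyL => hdisj y hyL hy⟩
  -- two distinct edges in E(L,L')
  obtain ⟨e₁, e₂, he₁, he₂, hne12⟩ :=
    (Set.one_lt_ncard_iff (Set.toFinite _)).mp hcon
  -- bL ∈ {e₁, e₂}
  have hbLmem : bL = e₁ ∨ bL = e₂ := by
    by_contra hno
    push_neg at hno
    have hsub3 : ({bL, e₁, e₂} : Set (Sym2 V)) ⊆ EBetween G L Lᶜ := by
      rintro e (rfl | rfl | rfl)
      · exact hmem
      · exact hsub he₁
      · exact hsub he₂
    have h3 : ({bL, e₁, e₂} : Set (Sym2 V)).ncard = 3 := by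
      rw [Set.ncard_insert_of_notMem (by simp [hno.1, hno.2]),
        Set.ncard_insert_of_notMem (by simp [hne12]), Set.ncard_singleton]
    have := Set.ncard_le_ncard hsub3 (Set.toFinite _)
    omega
  have hbLLL' : bL ∈ EBetween G L L' := by
    rcases hbLmem with rfl | rfl
    · exact he₁
    · exact he₂
  obtain ⟨x, y, hbLeq, hadjxy, hxL, hyL'⟩ := hbLLL'
  -- bL is a bridge
  have hbridge : H.IsBridge bL := by
    have : bL ∈ incidentBridges H L := by rw [hbL]; rfl
    exact this.1
  -- every H-edge leaving L equals bL
  have hkeyL : ∀ p q, p ∈ L → ¬ q ∈ L → H.Adj p q → s(p, q) = bL := by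
    intro p q hp hq hpq
    have hbr : H.IsBridge s(p, q) := by
      by_contra hnb
      have : (H.deleteEdges {e | H.IsBridge e}).Adj p q := by
        rw [deleteEdges_adj]
        exact ⟨hpq, hnb⟩
      exact hq (((blockOf_eq_of_mem H hp) ▸ rfl : L = blockOf H p) ▸
        (this.reachable : q ∈ blockOf H p))
    have : s(p, q) ∈ incidentBridges H L :=
      ⟨hbr, p, Sym2.mem_mk_left _ _, hp⟩
    rwa [hbL] at this
  -- every H-edge leaving L' equals bL (since bL = bL')
  have hbL'eq : bL' = bL := by
    have : bL ∈ incidentBridges H L' :=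
      ⟨hbridge, y, hbLeq ▸ Sym2.mem_mk_right _ _, hyL'⟩
    rw [hbL'] at this
    exact this.symm
  have hkeyL' : ∀ p q, p ∈ L' → ¬ q ∈ L' → H.Adj p q → s(p, q) = bL := by
    intro p q hp hq hpq
    have hbr : H.IsBridge s(p, q) := by
      by_contra hnb
      have : (H.deleteEdges {e | H.IsBridge e}).Adj p q := by
        rw [deleteEdges_adj]
        exact ⟨hpq, hnb⟩
      exact hq (((blockOf_eq_of_mem H hp) ▸ rfl : L' = blockOf H p) ▸
        (this.reachable : q ∈ blockOf H p))
    have h2 : s(p, q) ∈ incidentBridges H L' :=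
      ⟨hbr, p, Sym2.mem_mk_left _ _, hp⟩
    rw [hbL'] at h2
    rw [h2, hbL'eq]
  -- L ∪ L' is closed under H-adjacency
  have hclosed : ∀ p q, p ∈ L ∪ L' → H.Adj p q → q ∈ L ∪ L' := by
    intro p q hp hpq
    rcases hp with hp | hp
    · by_cases hq : q ∈ L
      · exact Or.inl hq
      · have heq := hkeyL p q hp hq hpq
        rw [hbLeq] at heq
        rw [Sym2.eq, Sym2.rel_iff', Prod.mk.injEq, Prod.mk.injEq] at heq
        rcases heq with ⟨rfl, rfl⟩ | h
        · exact Or.inr hyL'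
        · simp only [Prod.swap_prod_mk, Prod.mk.injEq] at h
          obtain ⟨rfl, rfl⟩ := h
          exact absurd hp (fun h => hdisj p h hyL')
    · by_cases hq : q ∈ L'
      · exact Or.inr hq
      · have heq := hkeyL' p q hp hq hpq
        rw [hbLeq] at heq
        rw [Sym2.eq, Sym2.rel_iff', Prod.mk.injEq, Prod.mk.injEq] at heq
        rcases heq with ⟨rfl, rfl⟩ | h
        · exact absurd hxL (fun h => hdisj p h hp)
        · simp only [Prod.swap_prod_mk, Prod.mk.injEq] at h
          obtain ⟨rfl, rfl⟩ := h
          exact Or.inl hxL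
  -- L ∪ L' = univ via connectivity
  have huniv : ∀ z : V, z ∈ L ∪ L' := by
    intro z
    obtain ⟨p⟩ := hHconn.preconnected v₀ z
    have : ∀ {a b : V} (w : H.Walk a b), a ∈ L ∪ L' → b ∈ L ∪ L' := by
      intro a b w
      induction w with
      | nil => exact id
      | cons h q ih => exact fun ha => ih (hclosed _ _ ha h)
    exact this p (Or.inl (mem_blockOf_self H v₀))
  -- contradiction with hstar
  obtain ⟨v, hv⟩ := hstar
  rcases huniv v with hvL | hvL'
  · rw [← blockOf_eq_of_mem H hvL, hbL, Set.ncard_singleton] at hv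
    omega
  · rw [← blockOf_eq_of_mem H hvL', hbL', Set.ncard_singleton] at hv
    omega
end
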